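/- arXiv:1009.5331 — 4 statements merged into one kernel-verified Lean document; each statement's English description precedes it below -/
import Mathlib

section
/- (Concave Perron–Frobenius fixed point theorem.) Let (E, ‖·‖) be a Banach space, K ⊆ E a closed convex cone on which ‖·‖ is increasing (x ≤_K y implies ‖x‖ ≤ ‖y‖). Let T : K → K be concave, i.e., T(μx + (1-μ)y) ≥_K μT(x) + (1-μ)T(y) for all μ ∈ [0,1], x,y ∈ K. Suppose there exist e ∈ K \ {0} and constants a, b > 0 such that a·e ≤_K T(x) ≤_K b·e for all x ∈ K with ‖x‖ = 1. Then there exists a unique x* ∈ K with ‖x*‖ = 1 such that the iterates of the normalized operator T̃(x) = T(x)/‖T(x)‖ converge to x* for every starting point x ∈ K \ {0}. -/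
/-!
Closedness of the cone and concavity make `T` order preserving, and with the bounds
`a • e ≤ T x ≤ b • e` on the unit sphere they give, for unit vectors,
`l • y ≤ x → (l + (1 - l) * (a / b)) • T y ≤ T x`. By concavity of `log`, `T` therefore
contracts Hilbert's projective metric by the factor `1 - a / b`, and any two images of unit
vectors are at distance at most `-log ((a / b) ^ 2)`. On unit vectors of a cone with monotone
norm this metric dominates `‖x - y‖ / 3`, so the orbits of the normalized operator are Cauchy
and approach each other: they all converge to one point.
-/

open Filter Topology Set Function

theorem Real.one_sub_mul_log_le_log_add_mul {l c : ℝ} (hl : 0 < l) (hc0 : 0 ≤ c) (hc1 : c ≤ 1) :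
    (1 - c) * Real.log l ≤ Real.log (l + (1 - l) * c) := by
  have h := strictConcaveOn_log_Ioi.concaveOn.2 (mem_Ioi.2 hl) (mem_Ioi.2 one_pos)
    (sub_nonneg.2 hc1) hc0 (sub_add_cancel 1 c)
  simp only [smul_eq_mul, Real.log_one, mul_zero, add_zero, mul_one] at h
  rwa [show l + (1 - l) * c = (1 - c) * l + c by ring]

theorem exists_tendsto_iterate_of_dist_le {X : Type*} [PseudoMetricSpace X] [CompleteSpace X]
    {f : X → X} {S : Set X} (hS : MapsTo f S S) {x₀ : X} (hx₀ : x₀ ∈ S) {ε : ℕ → ℝ}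
    (hε : Tendsto ε atTop (𝓝 0)) (hdist : ∀ k, ∀ u ∈ S, ∀ v ∈ S, dist (f^[k] u) (f^[k] v) ≤ ε k) :
    ∃ z, ∀ u ∈ S, Tendsto (fun k => f^[k] u) atTop (𝓝 z) := by
  have hcauchy : CauchySeq fun k => f^[k] x₀ := by
    refine cauchySeq_of_le_tendsto_0 ε (fun n m N hn hm => ?_) hε
    obtain ⟨i, rfl⟩ := Nat.exists_eq_add_of_le hn
    obtain ⟨j, rfl⟩ := Nat.exists_eq_add_of_le hm
    rw [iterate_add_apply, iterate_add_apply]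
    exact hdist N _ (hS.iterate i hx₀) _ (hS.iterate j hx₀)
  obtain ⟨z, hz⟩ := cauchySeq_tendsto_of_complete hcauchy
  exact ⟨z, fun u hu => tendsto_of_tendsto_of_dist hz
    (squeeze_zero (fun _ => dist_nonneg) (fun k => hdist k _ hx₀ _ hu) hε)⟩

noncomputable def normalized {E : Type*} [NormedAddCommGroup E] [NormedSpace ℝ E] (T : E → E)
    (x : E) : E :=
  ‖T x‖⁻¹ • T x

namespace PointedCone

variable {E : Type*} [NormedAddCommGroup E] [NormedSpace ℝ E]

def ofConvex {K : Set E} (hconv : Convex ℝ K) (hsmul : ∀ x ∈ K, ∀ c : ℝ, 0 ≤ c → c • x ∈ K)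
    (hne : K.Nonempty) : PointedCone ℝ E where
  carrier := K
  zero_mem' := by simpa using hsmul _ hne.some_mem 0 le_rfl
  add_mem' {x y} hx hy := by
    have hmid := hconv hx hy (by norm_num : (0 : ℝ) ≤ 1 / 2) (by norm_num : (0 : ℝ) ≤ 1 / 2)
      (by norm_num)
    convert hsmul _ hmid 2 zero_le_two using 1
    module
  smul_mem' c x hx := hsmul x hx c c.2

variable (C : PointedCone ℝ E)

def HasMonotoneNorm : Prop := ∀ x ∈ C, ∀ y ∈ C, y - x ∈ C → ‖x‖ ≤ ‖y‖

theorem sub_mem_trans {x y z : E} (hxy : x - y ∈ C) (hyz : y - z ∈ C) : x - z ∈ C := by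
  simpa using C.add_mem hxy hyz

variable {C}

theorem HasMonotoneNorm.le_one_of_sub_smul_mem (hmono : C.HasMonotoneNorm) {x y : E}
    (hx : x ∈ C) (hy : y ∈ C) (hx1 : ‖x‖ = 1) (hy1 : ‖y‖ = 1) {t : ℝ} (ht : 0 ≤ t)
    (h : x - t • y ∈ C) : t ≤ 1 := by
  simpa [norm_smul, abs_of_nonneg ht, hx1, hy1] using hmono _ (C.smul_mem ht hy) x hx h

theorem HasMonotoneNorm.le_of_smul_le_of_le_smul (hmono : C.HasMonotoneNorm) {e x : E}
    (he : e ∈ C) (he0 : e ≠ 0) (hx : x ∈ C) {a b : ℝ} (ha : 0 ≤ a) (hb : 0 ≤ b)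
    (hax : x - a • e ∈ C) (hxb : b • e - x ∈ C) : a ≤ b := by
  have h := (hmono _ (C.smul_mem ha he) x hx hax).trans (hmono x hx _ (C.smul_mem hb he) hxb)
  rw [norm_smul, norm_smul, Real.norm_of_nonneg ha, Real.norm_of_nonneg hb] at h
  exact le_of_mul_le_mul_right h (norm_pos_iff.2 he0)

variable (C) in
/-- Hilbert's projective distance of `x` and `y`, the infimum of `-log (l * l')` over
`l • y ≤ x` and `l' • x ≤ y`, is at most `d`. -/
def HilbertDistLE (x y : E) (d : ℝ) : Prop :=
  ∃ l l' : ℝ, 0 < l ∧ 0 < l' ∧ x - l • y ∈ C ∧ y - l' • x ∈ C ∧ -Real.log (l * l') ≤ d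

theorem HilbertDistLE.smul {x y : E} {d p q : ℝ} (h : C.HilbertDistLE x y d) (hp : 0 < p)
    (hq : 0 < q) : C.HilbertDistLE (p • x) (q • y) d := by
  obtain ⟨l, l', hl, hl', hxy, hyx, hd⟩ := h
  refine ⟨l * p / q, l' * q / p, by positivity, by positivity, ?_, ?_, ?_⟩
  · convert C.smul_mem hp.le hxy using 1
    rw [smul_smul, smul_sub, smul_smul]
    field_simp
  · convert C.smul_mem hq.le hyx using 1
    rw [smul_smul, smul_sub, smul_smul]
    field_simp
  · convert hd using 3
    field_simp

theorem HilbertDistLE.norm_sub_le (hmono : C.HasMonotoneNorm) {x y : E} {d : ℝ}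
    (h : C.HilbertDistLE x y d) (hx : x ∈ C) (hy : y ∈ C) (hx1 : ‖x‖ = 1) (hy1 : ‖y‖ = 1) :
    ‖x - y‖ ≤ 3 * d := by
  obtain ⟨l, l', hl, hl', hxy, hyx, hd⟩ := h
  have hl1 := hmono.le_one_of_sub_smul_mem hx hy hx1 hy1 hl.le hxy
  have hl'1 := hmono.le_one_of_sub_smul_mem hy hx hy1 hx1 hl'.le hyx
  -- `0 ≤ x - l • y ≤ (1 - l') • x + (1 - l) • y` in the cone order
  have hsandwich : ‖x - l • y‖ ≤ ‖(1 - l') • x + (1 - l) • y‖ :=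
    hmono _ hxy _ (C.add_mem (C.smul_mem (by linarith) hx) (C.smul_mem (by linarith) hy))
      (by convert hyx using 1; module)
  have hupper : ‖(1 - l') • x + (1 - l) • y‖ ≤ (1 - l') + (1 - l) := by
    refine (norm_add_le _ _).trans_eq ?_
    rw [norm_smul, norm_smul, hx1, hy1, Real.norm_of_nonneg (by linarith),
      Real.norm_of_nonneg (by linarith), mul_one, mul_one]
  have htri : ‖x - y‖ ≤ ‖x - l • y‖ + (1 - l) := by
    rw [show x - y = (x - l • y) - (1 - l) • y by module]
    refine (_root_.norm_sub_le _ _).trans_eq ?_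
    rw [norm_smul, hy1, mul_one, Real.norm_of_nonneg (by linarith)]
  have hlog := Real.log_le_sub_one_of_pos (mul_pos hl hl')
  -- `2 * (1 - l) + (1 - l') ≤ 3 * (1 - l * l') ≤ -3 * log (l * l')`
  nlinarith

theorem HilbertDistLE.iterate {f : E → E} {S : Set E} (hS : MapsTo f S S) {r : ℝ}
    (hf : ∀ x ∈ S, ∀ y ∈ S, ∀ d, C.HilbertDistLE x y d → C.HilbertDistLE (f x) (f y) (r * d))
    {x y : E} (hx : x ∈ S) (hy : y ∈ S) {d : ℝ} (h : C.HilbertDistLE x y d) (k : ℕ) :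
    C.HilbertDistLE (f^[k] x) (f^[k] y) (r ^ k * d) := by
  induction k with
  | zero => simpa using h
  | succ k ih =>
    rw [iterate_succ_apply', iterate_succ_apply', pow_succ', mul_assoc]
    exact hf _ (hS.iterate k hx) _ (hS.iterate k hy) _ ih

variable (C) in
structure IsConcaveSelfMap (T : E → E) : Prop where
  mapsTo : ∀ x ∈ C, T x ∈ C
  concave : ∀ μ : ℝ, 0 ≤ μ → μ ≤ 1 → ∀ x ∈ C, ∀ y ∈ C,
    T (μ • x + (1 - μ) • y) - (μ • T x + (1 - μ) • T y) ∈ C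

namespace IsConcaveSelfMap

variable {T : E → E}

theorem apply_sub_smul_apply_mem_of_lt_one (hT : C.IsConcaveSelfMap T) {x y : E} (hy : y ∈ C)
    (hxy : x - y ∈ C) {μ : ℝ} (hμ0 : 0 ≤ μ) (hμ1 : μ < 1) : T x - μ • T y ∈ C := by
  have hμ : 1 - μ ≠ 0 := by linarith
  -- write `x = μ • y + (1 - μ) • z` with `z ≥ y`
  set z := y + (1 - μ)⁻¹ • (x - y)
  have hz : z ∈ C := C.add_mem hy (C.smul_mem (inv_nonneg.2 (sub_nonneg.2 hμ1.le)) hxy)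
  have hx : μ • y + (1 - μ) • z = x := by
    simp only [z, smul_add, smul_smul, mul_inv_cancel₀ hμ]
    module
  have h := hT.concave μ hμ0 hμ1.le y hy z hz
  rw [hx] at h
  convert C.add_mem h (C.smul_mem (sub_nonneg.2 hμ1.le) (hT.mapsTo z hz)) using 1
  module

theorem apply_sub_apply_mem (hT : C.IsConcaveSelfMap T) (hC : IsClosed (C : Set E)) {x y : E}
    (hy : y ∈ C) (hxy : x - y ∈ C) : T x - T y ∈ C := by
  have hlim : Tendsto (fun μ : ℝ => T x - μ • T y) (𝓝[<] 1) (𝓝 (T x - T y)) := by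
    have h : Tendsto (fun μ : ℝ => T x - μ • T y) (𝓝 1) (𝓝 (T x - (1 : ℝ) • T y)) :=
      (tendsto_id.smul_const (T y)).const_sub (T x)
    simpa using h.mono_left nhdsWithin_le_nhds
  refine hC.mem_of_tendsto hlim ?_
  filter_upwards [Ioo_mem_nhdsLT zero_lt_one] with μ hμ
  exact hT.apply_sub_smul_apply_mem_of_lt_one hy hxy hμ.1.le hμ.2

theorem apply_smul_sub_smul_apply_mem (hT : C.IsConcaveSelfMap T) {x : E} (hx : x ∈ C) {t : ℝ}
    (ht0 : 0 ≤ t) (ht1 : t ≤ 1) : T (t • x) - t • T x ∈ C := by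
  have h := hT.concave t ht0 ht1 x hx 0 C.zero_mem
  rw [smul_zero, add_zero] at h
  convert C.add_mem h (C.smul_mem (sub_nonneg.2 ht1) (hT.mapsTo 0 C.zero_mem)) using 1
  module

variable {e : E} {a b : ℝ}

theorem apply_sub_smul_mem_of_one_le_norm (hT : C.IsConcaveSelfMap T) (hC : IsClosed (C : Set E))
    (hlow : ∀ x ∈ C, ‖x‖ = 1 → T x - a • e ∈ C) {x : E} (hx : x ∈ C) (hx1 : 1 ≤ ‖x‖) :
    T x - a • e ∈ C := by
  have hx0 : x ≠ 0 := norm_pos_iff.1 (one_pos.trans_le hx1)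
  have hu : ‖x‖⁻¹ • x ∈ C := C.smul_mem (by positivity) hx
  have hxu : x - ‖x‖⁻¹ • x ∈ C := by
    convert C.smul_mem (sub_nonneg.2 (inv_le_one_of_one_le₀ hx1)) hx using 1
    module
  exact C.sub_mem_trans (hT.apply_sub_apply_mem hC hu hxu) (hlow _ hu (norm_smul_inv_norm hx0))

theorem apply_ne_zero (hT : C.IsConcaveSelfMap T) (hC : IsClosed (C : Set E))
    (hmono : C.HasMonotoneNorm) (he : e ∈ C) (he0 : e ≠ 0) (ha : 0 < a)
    (hlow : ∀ x ∈ C, ‖x‖ = 1 → T x - a • e ∈ C) {x : E} (hx : x ∈ C) (hx0 : x ≠ 0) :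
    T x ≠ 0 := by
  have hxpos : 0 < ‖x‖ := norm_pos_iff.2 hx0
  set u := ‖x‖⁻¹ • x
  have hu : u ∈ C := C.smul_mem (by positivity) hx
  set t := min 1 ‖x‖
  have ht : 0 < t := lt_min one_pos hxpos
  -- `T x ≥ T (t • u) ≥ t • T u ≥ t • a • e`
  have hxtu : x - t • u ∈ C := by
    convert C.smul_mem (sub_nonneg.2 (min_le_right 1 ‖x‖)) hu using 1
    simp only [u, t, smul_smul, sub_mul, mul_inv_cancel₀ hxpos.ne', sub_smul, one_smul]
  have hlower : T x - t • a • e ∈ C :=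
    C.sub_mem_trans (hT.apply_sub_apply_mem hC (C.smul_mem ht.le hu) hxtu) <|
      C.sub_mem_trans (hT.apply_smul_sub_smul_apply_mem hu ht.le (min_le_left 1 ‖x‖)) <| by
        simpa [smul_sub] using C.smul_mem ht.le (hlow u hu (norm_smul_inv_norm hx0))
  have hnorm := hmono _ (C.smul_mem ht.le (C.smul_mem ha.le he)) _ (hT.mapsTo x hx) hlower
  exact norm_pos_iff.1
    ((norm_pos_iff.2 (smul_ne_zero ht.ne' (smul_ne_zero ha.ne' he0))).trans_le hnorm)

theorem apply_sub_smul_add_smul_mem (hT : C.IsConcaveSelfMap T) (hC : IsClosed (C : Set E))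
    (hlow : ∀ x ∈ C, ‖x‖ = 1 → T x - a • e ∈ C) {x y : E} (hy : y ∈ C) (hx1 : ‖x‖ = 1)
    (hy1 : ‖y‖ = 1) {l : ℝ} (hl0 : 0 ≤ l) (hl1 : l < 1) (hxy : x - l • y ∈ C) :
    T x - (l • T y + (1 - l) • a • e) ∈ C := by
  have hl : 0 < 1 - l := sub_pos.2 hl1
  -- `x = l • y + (1 - l) • z` with `‖z‖ ≥ 1`, so that `T z ≥ a • e`
  set z := (1 - l)⁻¹ • (x - l • y)
  have hz : z ∈ C := C.smul_mem (inv_nonneg.2 hl.le) hxy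
  have hz1 : 1 ≤ ‖z‖ := by
    have h := norm_sub_norm_le x (l • y)
    rw [hx1, norm_smul, hy1, mul_one, Real.norm_of_nonneg hl0] at h
    rw [norm_smul, Real.norm_of_nonneg (inv_nonneg.2 hl.le), le_inv_mul_iff₀ hl, mul_one]
    exact h
  have hx : l • y + (1 - l) • z = x := by
    simp only [z, smul_smul, mul_inv_cancel₀ hl.ne', one_smul]
    abel
  have h := hT.concave l hl0 hl1.le y hy z hz
  rw [hx] at h
  convert C.add_mem h (C.smul_mem hl.le (hT.apply_sub_smul_mem_of_one_le_norm hC hlow hz hz1))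
    using 1
  module

theorem apply_sub_smul_apply_mem (hT : C.IsConcaveSelfMap T) (hC : IsClosed (C : Set E))
    (ha : 0 ≤ a) (hb : 0 < b) (hlow : ∀ x ∈ C, ‖x‖ = 1 → T x - a • e ∈ C)
    (hup : ∀ x ∈ C, ‖x‖ = 1 → b • e - T x ∈ C)
    {x y : E} (hy : y ∈ C) (hx1 : ‖x‖ = 1) (hy1 : ‖y‖ = 1) {l : ℝ} (hl0 : 0 ≤ l) (hl1 : l ≤ 1)
    (hxy : x - l • y ∈ C) : T x - (l + (1 - l) * (a / b)) • T y ∈ C := by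
  rcases hl1.lt_or_eq with hl1 | rfl
  · -- `a • e ≥ (a / b) • T y` because `b • e ≥ T y`
    have hupper := C.smul_mem (div_nonneg ha hb.le) (hup y hy hy1)
    convert C.add_mem (hT.apply_sub_smul_add_smul_mem hC hlow
      hy hx1 hy1 hl0 hl1 hxy) (C.smul_mem (sub_nonneg.2 hl1.le) hupper) using 1
    rw [smul_sub, smul_smul (a / b) b, div_mul_cancel₀ a hb.ne']
    module
  · simpa using hT.apply_sub_apply_mem hC hy (by simpa using hxy)

theorem hilbertDistLE_apply_of_hilbertDistLE (hT : C.IsConcaveSelfMap T)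
    (hC : IsClosed (C : Set E)) (hmono : C.HasMonotoneNorm) (ha : 0 < a) (hab : a ≤ b)
    (hlow : ∀ x ∈ C, ‖x‖ = 1 → T x - a • e ∈ C)
    (hup : ∀ x ∈ C, ‖x‖ = 1 → b • e - T x ∈ C) {x y : E} (hx : x ∈ C)
    (hy : y ∈ C) (hx1 : ‖x‖ = 1) (hy1 : ‖y‖ = 1) {d : ℝ} (h : C.HilbertDistLE x y d) :
    C.HilbertDistLE (T x) (T y) ((1 - a / b) * d) := by
  obtain ⟨l, l', hl, hl', hxy, hyx, hd⟩ := h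
  have hb : 0 < b := ha.trans_le hab
  have hc0 : 0 ≤ a / b := div_nonneg ha.le hb.le
  have hc1 : a / b ≤ 1 := (div_le_one hb).2 hab
  have hl1 := hmono.le_one_of_sub_smul_mem hx hy hx1 hy1 hl.le hxy
  have hl'1 := hmono.le_one_of_sub_smul_mem hy hx hy1 hx1 hl'.le hyx
  have hm : 0 < l + (1 - l) * (a / b) := add_pos_of_pos_of_nonneg hl
    (mul_nonneg (sub_nonneg.2 hl1) hc0)
  have hm' : 0 < l' + (1 - l') * (a / b) := add_pos_of_pos_of_nonneg hl'
    (mul_nonneg (sub_nonneg.2 hl'1) hc0)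
  refine ⟨_, _, hm, hm',
    hT.apply_sub_smul_apply_mem hC ha.le hb hlow hup hy hx1 hy1 hl.le hl1 hxy,
    hT.apply_sub_smul_apply_mem hC ha.le hb hlow hup hx hy1 hx1 hl'.le hl'1 hyx, ?_⟩
  have hlog := Real.one_sub_mul_log_le_log_add_mul hl hc0 hc1
  have hlog' := Real.one_sub_mul_log_le_log_add_mul hl' hc0 hc1
  calc -Real.log ((l + (1 - l) * (a / b)) * (l' + (1 - l') * (a / b)))
      ≤ (1 - a / b) * -Real.log (l * l') := by
        rw [Real.log_mul hm.ne' hm'.ne', Real.log_mul hl.ne' hl'.ne']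
        linarith
    _ ≤ (1 - a / b) * d := mul_le_mul_of_nonneg_left hd (sub_nonneg.2 hc1)

theorem hilbertDistLE_apply (hT : C.IsConcaveSelfMap T) (hC : IsClosed (C : Set E))
    (ha : 0 < a) (hb : 0 < b)
    (hlow : ∀ x ∈ C, ‖x‖ = 1 → T x - a • e ∈ C)
    (hup : ∀ x ∈ C, ‖x‖ = 1 → b • e - T x ∈ C) {x y : E} (hx : x ∈ C)
    (hy : y ∈ C) (hx1 : ‖x‖ = 1) (hy1 : ‖y‖ = 1) :
    C.HilbertDistLE (T x) (T y) (-Real.log ((a / b) ^ 2)) := by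
  -- the case `l = 0`: `T x ≥ (a / b) • T y`
  have hxy := hT.apply_sub_smul_apply_mem hC ha.le hb hlow hup hy hx1 hy1 le_rfl zero_le_one
    (by simpa using hx)
  have hyx := hT.apply_sub_smul_apply_mem hC ha.le hb hlow hup hx hy1 hx1 le_rfl zero_le_one
    (by simpa using hy)
  simp only [sub_zero, one_mul, zero_add] at hxy hyx
  exact ⟨a / b, a / b, by positivity, by positivity, hxy, hyx, by rw [sq]⟩

theorem inv_norm_apply_pos (hT : C.IsConcaveSelfMap T) (hC : IsClosed (C : Set E))
    (hmono : C.HasMonotoneNorm) (he : e ∈ C) (he0 : e ≠ 0) (ha : 0 < a)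
    (hlow : ∀ x ∈ C, ‖x‖ = 1 → T x - a • e ∈ C) {x : E} (hx : x ∈ C) (hx0 : x ≠ 0) :
    0 < ‖T x‖⁻¹ :=
  inv_pos.2 (norm_pos_iff.2 (hT.apply_ne_zero hC hmono he he0 ha hlow hx hx0))

theorem mapsTo_normalized (hT : C.IsConcaveSelfMap T) (hC : IsClosed (C : Set E))
    (hmono : C.HasMonotoneNorm) (he : e ∈ C) (he0 : e ≠ 0) (ha : 0 < a)
    (hlow : ∀ x ∈ C, ‖x‖ = 1 → T x - a • e ∈ C) :
    MapsTo (normalized T) (C \ {0}) {x | x ∈ C ∧ ‖x‖ = 1} := fun x hx =>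
  ⟨C.smul_mem (hT.inv_norm_apply_pos hC hmono he he0 ha hlow hx.1 hx.2).le (hT.mapsTo x hx.1),
    norm_smul_inv_norm (hT.apply_ne_zero hC hmono he he0 ha hlow hx.1 hx.2)⟩

theorem hilbertDistLE_normalized (hT : C.IsConcaveSelfMap T) (hC : IsClosed (C : Set E))
    (hmono : C.HasMonotoneNorm) (he : e ∈ C) (he0 : e ≠ 0) (ha : 0 < a) (hb : 0 < b)
    (hlow : ∀ x ∈ C, ‖x‖ = 1 → T x - a • e ∈ C)
    (hup : ∀ x ∈ C, ‖x‖ = 1 → b • e - T x ∈ C) {x y : E} (hx : x ∈ C)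
    (hy : y ∈ C) (hx1 : ‖x‖ = 1) (hy1 : ‖y‖ = 1) :
    C.HilbertDistLE (normalized T x) (normalized T y) (-Real.log ((a / b) ^ 2)) :=
  (hT.hilbertDistLE_apply hC ha hb hlow hup hx hy hx1 hy1).smul
    (hT.inv_norm_apply_pos hC hmono he he0 ha hlow hx (norm_pos_iff.1 (hx1 ▸ one_pos)))
    (hT.inv_norm_apply_pos hC hmono he he0 ha hlow hy (norm_pos_iff.1 (hy1 ▸ one_pos)))

theorem hilbertDistLE_normalized_of_hilbertDistLE (hT : C.IsConcaveSelfMap T)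
    (hC : IsClosed (C : Set E)) (hmono : C.HasMonotoneNorm) (he : e ∈ C) (he0 : e ≠ 0)
    (ha : 0 < a) (hab : a ≤ b) (hlow : ∀ x ∈ C, ‖x‖ = 1 → T x - a • e ∈ C)
    (hup : ∀ x ∈ C, ‖x‖ = 1 → b • e - T x ∈ C)
    {x y : E} (hx : x ∈ C) (hy : y ∈ C) (hx1 : ‖x‖ = 1) (hy1 : ‖y‖ = 1) {d : ℝ}
    (h : C.HilbertDistLE x y d) :
    C.HilbertDistLE (normalized T x) (normalized T y) ((1 - a / b) * d) :=
  (hT.hilbertDistLE_apply_of_hilbertDistLE hC hmono ha hab hlow hup hx hy hx1 hy1 h).smul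
    (hT.inv_norm_apply_pos hC hmono he he0 ha hlow hx (norm_pos_iff.1 (hx1 ▸ one_pos)))
    (hT.inv_norm_apply_pos hC hmono he he0 ha hlow hy (norm_pos_iff.1 (hy1 ▸ one_pos)))

theorem exists_tendsto_normalized_iterate [CompleteSpace E] (hT : C.IsConcaveSelfMap T)
    (hC : IsClosed (C : Set E)) (hmono : C.HasMonotoneNorm) (he : e ∈ C) (he0 : e ≠ 0)
    (ha : 0 < a) (hb : 0 < b) (hlow : ∀ x ∈ C, ‖x‖ = 1 → T x - a • e ∈ C)
    (hup : ∀ x ∈ C, ‖x‖ = 1 → b • e - T x ∈ C) :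
    ∃ z ∈ {x | x ∈ C ∧ ‖x‖ = 1}, ∀ x ∈ C, x ≠ 0 →
      Tendsto (fun k => (normalized T)^[k] x) atTop (𝓝 z) := by
  set U := {x | x ∈ C ∧ ‖x‖ = 1}
  have hG : MapsTo (normalized T) (C \ {0}) U := hT.mapsTo_normalized hC hmono he he0 ha hlow
  have hSU : normalized T '' U ⊆ U :=
    (hG.mono_left fun x (hx : x ∈ U) => ⟨hx.1, norm_pos_iff.1 (hx.2 ▸ one_pos)⟩).image_subset
  have hS : MapsTo (normalized T) (normalized T '' U) (normalized T '' U) := fun x hx =>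
    mem_image_of_mem _ (hSU hx)
  have heU : normalized T e ∈ U := hG ⟨he, he0⟩
  have hx₀ : normalized T (normalized T e) ∈ normalized T '' U := mem_image_of_mem _ heU
  have hab : a ≤ b := hmono.le_of_smul_le_of_le_smul he he0 (hT.mapsTo _ heU.1) ha.le hb.le
    (hlow _ heU.1 heU.2) (hup _ heU.1 heU.2)
  have hε : Tendsto (fun k => 3 * ((1 - a / b) ^ k * -Real.log ((a / b) ^ 2))) atTop (𝓝 0) := by
    simpa only [zero_mul, mul_zero] using ((tendsto_pow_atTop_nhds_zero_of_lt_one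
      (sub_nonneg.2 ((div_le_one hb).2 hab)) (sub_lt_self 1 (div_pos ha hb))).mul_const
      (-Real.log ((a / b) ^ 2))).const_mul 3
  have hdist : ∀ k, ∀ u ∈ normalized T '' U, ∀ v ∈ normalized T '' U,
      dist ((normalized T)^[k] u) ((normalized T)^[k] v) ≤
        3 * ((1 - a / b) ^ k * -Real.log ((a / b) ^ 2)) := by
    intro k u hu v hv
    obtain ⟨x, hx, rfl⟩ := id hu
    obtain ⟨y, hy, rfl⟩ := id hv
    have huk := hSU (hS.iterate k hu)
    have hvk := hSU (hS.iterate k hv)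
    rw [dist_eq_norm]
    have h₀ := hT.hilbertDistLE_normalized hC hmono he he0 ha hb hlow hup hx.1 hy.1 hx.2 hy.2
    refine (HilbertDistLE.iterate hS (fun u hu v hv d h => ?_) hu hv h₀ k).norm_sub_le
      hmono huk.1 hvk.1 huk.2 hvk.2
    exact hT.hilbertDistLE_normalized_of_hilbertDistLE hC hmono he he0 ha hab hlow hup
      (hSU hu).1 (hSU hv).1 (hSU hu).2 (hSU hv).2 h
  obtain ⟨z, hz⟩ := exists_tendsto_iterate_of_dist_le hS hx₀ hε hdist
  have hzU : z ∈ U := (hC.inter (isClosed_eq continuous_norm continuous_const)).mem_of_tendsto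
    (hz _ hx₀) (Eventually.of_forall fun k => hSU (hS.iterate k hx₀))
  -- after two steps the orbit of any `x ≠ 0` enters `normalized T '' U`
  refine ⟨z, hzU, fun x hx hx0 => (tendsto_add_atTop_iff_nat 2).1 ?_⟩
  simp only [iterate_add_apply]
  exact hz _ (mem_image_of_mem _ (hG ⟨hx, hx0⟩))

end IsConcaveSelfMap

end PointedCone

/-- **Concave Perron–Frobenius fixed point theorem** (Krause).
Let `K` be a closed convex cone in a Banach space `E` on which the norm is increasing for
the cone order (`y - x ∈ K → ‖x‖ ≤ ‖y‖`). Let `T : K → K` be concave with respect to the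
cone order, and suppose there are `e ∈ K \ {0}` and constants `a, b > 0` with
`a•e ≤_K T(x) ≤_K b•e` for all `x ∈ K` of norm one. Then the iterates of the normalized
operator `T̃(x) = T(x)/‖T(x)‖` converge to a unique `x* ∈ K` of norm one from every
starting point `x ∈ K \ {0}`. -/
theorem concave_perron_frobenius
    {E : Type*} [NormedAddCommGroup E] [NormedSpace ℝ E] [CompleteSpace E]
    (K : Set E) (hKclosed : IsClosed K) (hKconvex : Convex ℝ K)
    (hKcone : ∀ x ∈ K, ∀ c : ℝ, 0 ≤ c → c • x ∈ K)
    (hnorm_incr : ∀ x ∈ K, ∀ y ∈ K, y - x ∈ K → ‖x‖ ≤ ‖y‖)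
    (T : E → E) (hTmap : ∀ x ∈ K, T x ∈ K)
    (hTconcave : ∀ μ : ℝ, 0 ≤ μ → μ ≤ 1 → ∀ x ∈ K, ∀ y ∈ K,
      T (μ • x + (1 - μ) • y) - (μ • T x + (1 - μ) • T y) ∈ K)
    (e : E) (he : e ∈ K) (he0 : e ≠ 0) (a b : ℝ) (ha : 0 < a) (hb : 0 < b)
    (hbound : ∀ x ∈ K, ‖x‖ = 1 → T x - a • e ∈ K ∧ b • e - T x ∈ K) :
    ∃! xstar : E, xstar ∈ K ∧ ‖xstar‖ = 1 ∧
      ∀ x ∈ K, x ≠ 0 →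
        Tendsto (fun k => (fun y => ‖T y‖⁻¹ • T y)^[k] x) atTop (𝓝 xstar) := by
  obtain ⟨C, rfl⟩ : ∃ C : PointedCone ℝ E, (C : Set E) = K :=
    ⟨.ofConvex hKconvex hKcone ⟨e, he⟩, rfl⟩
  obtain ⟨z, ⟨hzC, hz1⟩, hz⟩ := PointedCone.IsConcaveSelfMap.exists_tendsto_normalized_iterate
    ⟨hTmap, hTconcave⟩ hKclosed hnorm_incr he he0 ha hb (fun x hx hx1 => (hbound x hx hx1).1)
    fun x hx hx1 => (hbound x hx hx1).2
  exact ⟨z, ⟨hzC, hz1, hz⟩, fun y hy => tendsto_nhds_unique (hy.2.2 e he he0) (hz e he he0)⟩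
end

section
/- For 0 < ρ < 1 and unit vectors s₁,…,sₙ ∈ R^p, the normalized regularized Tyler iteration Σ̂_{j+1} = T(Σ̂_j)/(Tr(T(Σ̂_j))/p), where T(Σ) = (1-ρ)(p/n) Σᵢ sᵢsᵢ^T/(sᵢ^T Σ^{-1} sᵢ) + ρI, converges to a unique positive definite limit with trace p, independent of the positive definite initial matrix Σ̂₀. -/
open Matrix Finset Filter Topology

/-- The regularized Tyler map
`T(Σ) = (1-ρ)(p/n) Σᵢ sᵢsᵢᵀ/(sᵢᵀ Σ⁻¹ sᵢ) + ρ I`. -/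
noncomputable def tylerMap {p n : ℕ} (s : Fin n → Fin p → ℝ) (ρ : ℝ)
    (A : Matrix (Fin p) (Fin p) ℝ) : Matrix (Fin p) (Fin p) ℝ :=
  ((1 - ρ) * ((p : ℝ) / (n : ℝ))) •
      ∑ i, (1 / (s i ⬝ᵥ A⁻¹.mulVec (s i))) • vecMulVec (s i) (s i) + ρ • 1

/-- One step of the iteration: apply `T` and renormalize the trace to `p`. -/
noncomputable def tylerIter {p n : ℕ} (s : Fin n → Fin p → ℝ) (ρ : ℝ)
    (A : Matrix (Fin p) (Fin p) ℝ) : Matrix (Fin p) (Fin p) ℝ :=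
  ((p : ℝ) / (tylerMap s ρ A).trace) • tylerMap s ρ A

/-!
The normalized Tyler map contracts Hilbert's projective metric. Write `A ≤ M B` for the order of
quadratic forms and `M(A/B)` for the least such `M`; the gap `M(A/B) M(B/A) - 1` vanishes exactly
on proportional matrices. Inversion reverses the order, so `A ≤ M B` makes every weight
`1 / sᵢᵀA⁻¹sᵢ` at most `M` times the corresponding weight of `B`. The weights of a trace-`p`
matrix are at most `p`, so the rank-one part of `T(B)` is at most `q = (1 - ρ) p²` times the
identity, and the regularization `ρ I` improves `T(A) ≤ M T(B)` to `T(A) ≤ (1 + θ (M - 1)) T(B)`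
with `θ = q / (q + ρ) < 1`. Trace normalization does not change `M(A/B) M(B/A)`, so the gap
shrinks by the factor `θ` at every step.

On the trace-`p` matrices bounded below by `ρ / (q + ρ)` times the identity, a closed set that
the iteration enters after two steps and never leaves, the gap dominates the entrywise distance.
Hence all orbits are Cauchy with a common limit, which lies in that set and so is positive
definite of trace `p`.
-/

namespace Matrix

variable {ι : Type*} [Fintype ι]

theorem IsHermitian.dotProduct_mulVec_comm {A : Matrix ι ι ℝ} (hA : A.IsHermitian) (x y : ι → ℝ) :
    x ⬝ᵥ A *ᵥ y = y ⬝ᵥ A *ᵥ x := by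
  rw [dotProduct_mulVec, ← mulVec_transpose, dotProduct_comm,
    ← conjTranspose_eq_transpose_of_trivial, hA.eq]

theorem trace_eq_sum_dotProduct_mulVec_single [DecidableEq ι] (A : Matrix ι ι ℝ) :
    A.trace = ∑ i, Pi.single i 1 ⬝ᵥ A *ᵥ Pi.single i 1 := by
  simp [Matrix.trace, mulVec_single]

theorem sq_dotProduct_le (x y : ι → ℝ) : (x ⬝ᵥ y) ^ 2 ≤ (x ⬝ᵥ x) * (y ⬝ᵥ y) := by
  simpa [dotProduct, sq] using Finset.sum_mul_sq_le_sq_mul_sq Finset.univ x y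

theorem PosSemidef.dotProduct_mulVec_le_trace_mul {A : Matrix ι ι ℝ} (hA : A.PosSemidef)
    (x : ι → ℝ) : x ⬝ᵥ A *ᵥ x ≤ A.trace * (x ⬝ᵥ x) := by
  classical
  obtain ⟨B, rfl⟩ : ∃ B : Matrix ι ι ℝ, A = Bᴴ * B := by
    open scoped MatrixOrder in
    exact CStarAlgebra.nonneg_iff_eq_star_mul_self.mp hA.nonneg
  have hrows : (Bᴴ * B).trace = ∑ i, B i ⬝ᵥ B i := by
    simp only [Matrix.trace, diag_apply, Matrix.mul_apply, conjTranspose_apply, star_trivial,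
      dotProduct]
    exact Finset.sum_comm
  calc x ⬝ᵥ (Bᴴ * B) *ᵥ x = ∑ i, (B i ⬝ᵥ x) ^ 2 := by
        rw [← mulVec_mulVec, dotProduct_mulVec, conjTranspose_eq_transpose_of_trivial,
          vecMul_transpose]
        simp [dotProduct, mulVec, sq]
    _ ≤ ∑ i, (B i ⬝ᵥ B i) * (x ⬝ᵥ x) := Finset.sum_le_sum fun i _ => sq_dotProduct_le _ _
    _ = (Bᴴ * B).trace * (x ⬝ᵥ x) := by rw [hrows, Finset.sum_mul]

theorem IsHermitian.abs_apply_le {D : Matrix ι ι ℝ} (hD : D.IsHermitian) {K : ℝ}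
    (h : ∀ x, |x ⬝ᵥ D *ᵥ x| ≤ K * (x ⬝ᵥ x)) (i j : ι) : |D i j| ≤ K := by
  classical
  set u : ι → ℝ := Pi.single i 1
  set v : ι → ℝ := Pi.single j 1
  have hpolar : (u + v) ⬝ᵥ D *ᵥ (u + v) - (u - v) ⬝ᵥ D *ᵥ (u - v) = 4 * D i j := by
    have huv : u ⬝ᵥ D *ᵥ v = D i j := by simp [u, v, mulVec_single]
    simp only [mulVec_add, mulVec_sub, add_dotProduct, sub_dotProduct, dotProduct_add,
      dotProduct_sub, hD.dotProduct_mulVec_comm v u, huv]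
    ring
  have hparallel : (u + v) ⬝ᵥ (u + v) + (u - v) ⬝ᵥ (u - v) = 4 := by
    simp only [add_dotProduct, sub_dotProduct, dotProduct_add, dotProduct_sub]
    simp only [dotProduct_single, Pi.single_eq_same, mul_one, u, v]
    ring
  have h₁ := h (u + v)
  have h₂ := h (u - v)
  have := abs_sub ((u + v) ⬝ᵥ D *ᵥ (u + v)) ((u - v) ⬝ᵥ D *ᵥ (u - v))
  rw [hpolar, abs_mul, abs_of_pos four_pos] at this
  have hK : K * ((u + v) ⬝ᵥ (u + v)) + K * ((u - v) ⬝ᵥ (u - v)) = 4 * K := by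
    rw [← mul_add, hparallel, mul_comm]
  linarith

theorem IsHermitian.posDef_of_forall_mul_dotProduct_self_le {A : Matrix ι ι ℝ}
    (hA : A.IsHermitian) {c : ℝ} (hc : 0 < c)
    (h : ∀ x, c * (x ⬝ᵥ x) ≤ x ⬝ᵥ A *ᵥ x) : A.PosDef :=
  .of_dotProduct_mulVec_pos hA fun x hx =>
    (mul_pos hc (dotProduct_self_star_pos_iff.mpr hx)).trans_le (h x)

variable [DecidableEq ι]

/-- Half of the variational formula `xᵀA⁻¹x = max_y (2 yᵀx - yᵀAy)`; the maximum is at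
`y = A⁻¹x`. -/
theorem PosDef.two_mul_dotProduct_sub_le {A : Matrix ι ι ℝ} (hA : A.PosDef) (x y : ι → ℝ) :
    2 * (y ⬝ᵥ x) - y ⬝ᵥ A *ᵥ y ≤ x ⬝ᵥ A⁻¹ *ᵥ x := by
  have hAA : A * A⁻¹ = 1 := mul_nonsing_inv A ((isUnit_iff_isUnit_det A).mp hA.isUnit)
  have h := hA.posSemidef.dotProduct_mulVec_nonneg (y - A⁻¹ *ᵥ x)
  have hsymm := hA.isHermitian.dotProduct_mulVec_comm
  simp only [star_trivial, mulVec_sub, sub_dotProduct, dotProduct_sub] at h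
  rw [hsymm (A⁻¹ *ᵥ x) y, mulVec_mulVec, hAA, one_mulVec, dotProduct_comm (A⁻¹ *ᵥ x) x] at h
  linarith

theorem PosDef.dotProduct_inv_mulVec_le {A B : Matrix ι ι ℝ} (hA : A.PosDef) (hB : B.PosDef)
    {M : ℝ} (hM : 0 < M) (h : ∀ y, y ⬝ᵥ A *ᵥ y ≤ M * (y ⬝ᵥ B *ᵥ y)) (x : ι → ℝ) :
    x ⬝ᵥ B⁻¹ *ᵥ x ≤ M * (x ⬝ᵥ A⁻¹ *ᵥ x) := by
  set y := B⁻¹ *ᵥ x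
  have hBB : B * B⁻¹ = 1 := mul_nonsing_inv B ((isUnit_iff_isUnit_det B).mp hB.isUnit)
  have hy : y ⬝ᵥ B *ᵥ y = x ⬝ᵥ B⁻¹ *ᵥ x := by
    rw [mulVec_mulVec, hBB, one_mulVec, dotProduct_comm]
  have hyx : y ⬝ᵥ x = x ⬝ᵥ B⁻¹ *ᵥ x := dotProduct_comm _ _
  have key := hA.two_mul_dotProduct_sub_le x (M⁻¹ • y)
  simp only [mulVec_smul, smul_dotProduct, dotProduct_smul, smul_eq_mul] at key
  calc x ⬝ᵥ B⁻¹ *ᵥ x = 2 * (y ⬝ᵥ x) - y ⬝ᵥ B *ᵥ y := by rw [hy, hyx]; ring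
    _ ≤ 2 * (y ⬝ᵥ x) - M⁻¹ * (y ⬝ᵥ A *ᵥ y) := by
        have : M⁻¹ * (y ⬝ᵥ A *ᵥ y) ≤ y ⬝ᵥ B *ᵥ y := (inv_mul_le_iff₀ hM).mpr (h y)
        linarith
    _ = M * (2 * (M⁻¹ * (y ⬝ᵥ x)) - M⁻¹ * (M⁻¹ * (y ⬝ᵥ A *ᵥ y))) := by field_simp
    _ ≤ M * (x ⬝ᵥ A⁻¹ *ᵥ x) := by gcongr

theorem PosDef.inv_dotProduct_inv_mulVec_le_trace {A : Matrix ι ι ℝ} (hA : A.PosDef)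
    {x : ι → ℝ} (hx : x ⬝ᵥ x = 1) : (x ⬝ᵥ A⁻¹ *ᵥ x)⁻¹ ≤ A.trace := by
  have hxA := hA.posSemidef.dotProduct_mulVec_le_trace_mul x
  rw [hx, mul_one] at hxA
  have ht : 0 < A.trace := by
    have hx0 : x ≠ 0 := by rintro rfl; simp at hx
    simpa using (hA.dotProduct_mulVec_pos hx0).trans_le hxA
  have key := hA.two_mul_dotProduct_sub_le x (A.trace⁻¹ • x)
  simp only [mulVec_smul, smul_dotProduct, dotProduct_smul, smul_eq_mul, hx] at key
  refine inv_le_of_inv_le₀ ht ?_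
  calc A.trace⁻¹ = 2 * (A.trace⁻¹ * 1) - A.trace⁻¹ * (A.trace⁻¹ * A.trace) := by
        field_simp; ring
    _ ≤ 2 * (A.trace⁻¹ * 1) - A.trace⁻¹ * (A.trace⁻¹ * (x ⬝ᵥ A *ᵥ x)) := by gcongr
    _ ≤ x ⬝ᵥ A⁻¹ *ᵥ x := key

end Matrix

open Matrix

section HilbertGap

variable {ι : Type*} [Fintype ι]

/-- Birkhoff's ratio `M(A/B)`, the least `c` with `A ≤ c • B` as quadratic forms. It is only
meaningful when such `c` exist and are bounded below, e.g. for equal positive traces;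
otherwise `sInf` returns a junk value. -/
noncomputable def maxRatio (A B : Matrix ι ι ℝ) : ℝ :=
  sInf {c | ∀ x, x ⬝ᵥ A *ᵥ x ≤ c * (x ⬝ᵥ B *ᵥ x)}

/-- `log (1 + hilbertGap A B)` is Hilbert's projective distance between `A` and `B`. -/
noncomputable def hilbertGap (A B : Matrix ι ι ℝ) : ℝ :=
  maxRatio A B * maxRatio B A - 1

theorem one_le_of_forall_dotProduct_mulVec_le {A B : Matrix ι ι ℝ} (htr : A.trace = B.trace)
    (hB : 0 < B.trace) {c : ℝ} (h : ∀ x, x ⬝ᵥ A *ᵥ x ≤ c * (x ⬝ᵥ B *ᵥ x)) : 1 ≤ c := by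
  classical
  have : A.trace ≤ c * B.trace := by
    rw [trace_eq_sum_dotProduct_mulVec_single, trace_eq_sum_dotProduct_mulVec_single,
      Finset.mul_sum]
    exact Finset.sum_le_sum fun i _ => h _
  rw [htr] at this
  nlinarith

theorem maxRatio_le {A B : Matrix ι ι ℝ} (htr : A.trace = B.trace) (hB : 0 < B.trace) {c : ℝ}
    (h : ∀ x, x ⬝ᵥ A *ᵥ x ≤ c * (x ⬝ᵥ B *ᵥ x)) : maxRatio A B ≤ c :=
  csInf_le ⟨1, fun _ => one_le_of_forall_dotProduct_mulVec_le htr hB⟩ h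

theorem one_le_maxRatio {A B : Matrix ι ι ℝ} (htr : A.trace = B.trace) (hB : 0 < B.trace)
    (hAB : ∃ c, ∀ x, x ⬝ᵥ A *ᵥ x ≤ c * (x ⬝ᵥ B *ᵥ x)) : 1 ≤ maxRatio A B :=
  le_csInf hAB fun _ => one_le_of_forall_dotProduct_mulVec_le htr hB

theorem dotProduct_mulVec_le_maxRatio_mul {A B : Matrix ι ι ℝ} (htr : A.trace = B.trace)
    (hB : 0 < B.trace) (hAB : ∃ c, ∀ x, x ⬝ᵥ A *ᵥ x ≤ c * (x ⬝ᵥ B *ᵥ x)) (x : ι → ℝ) :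
    x ⬝ᵥ A *ᵥ x ≤ maxRatio A B * (x ⬝ᵥ B *ᵥ x) := by
  have hclosed : IsClosed {c : ℝ | ∀ x, x ⬝ᵥ A *ᵥ x ≤ c * (x ⬝ᵥ B *ᵥ x)} := by
    simp only [Set.ofPred_forall]
    exact isClosed_iInter fun x => isClosed_le continuous_const (by fun_prop)
  exact hclosed.csInf_mem hAB ⟨1, fun _ => one_le_of_forall_dotProduct_mulVec_le htr hB⟩ x

theorem hilbertGap_le {A B : Matrix ι ι ℝ} (htr : A.trace = B.trace) (hB : 0 < B.trace) {N N' : ℝ}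
    (hAB : ∀ x, x ⬝ᵥ A *ᵥ x ≤ N * (x ⬝ᵥ B *ᵥ x)) (hBA : ∀ x, x ⬝ᵥ B *ᵥ x ≤ N' * (x ⬝ᵥ A *ᵥ x)) :
    hilbertGap A B ≤ N * N' - 1 := by
  have hA : 0 < A.trace := htr ▸ hB
  have hN := maxRatio_le htr hB hAB
  have hN' := maxRatio_le htr.symm hA hBA
  have h1 := one_le_maxRatio htr hB ⟨_, hAB⟩
  have h1' := one_le_maxRatio htr.symm hA ⟨_, hBA⟩
  unfold hilbertGap
  gcongr
  linarith

section SupNorm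

attribute [local instance] Matrix.normedAddCommGroup

theorem dist_le_trace_mul_hilbertGap {A B : Matrix ι ι ℝ} (hA : A.PosSemidef) (hB : B.PosSemidef)
    (htr : A.trace = B.trace) (hB0 : 0 < B.trace)
    (hAB : ∃ c, ∀ x, x ⬝ᵥ A *ᵥ x ≤ c * (x ⬝ᵥ B *ᵥ x))
    (hBA : ∃ c, ∀ x, x ⬝ᵥ B *ᵥ x ≤ c * (x ⬝ᵥ A *ᵥ x)) :
    dist A B ≤ B.trace * hilbertGap A B := by
  have hA0 : 0 < A.trace := htr ▸ hB0
  have hM := one_le_maxRatio htr hB0 hAB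
  have hM' := one_le_maxRatio htr.symm hA0 hBA
  have hgap : 0 ≤ hilbertGap A B := by unfold hilbertGap; nlinarith
  have hquad : ∀ x, |x ⬝ᵥ (A - B) *ᵥ x| ≤ B.trace * hilbertGap A B * (x ⬝ᵥ x) := by
    intro x
    set e := B.trace * (x ⬝ᵥ x)
    have hAe : x ⬝ᵥ A *ᵥ x ≤ e := by simpa [htr] using hA.dotProduct_mulVec_le_trace_mul x
    have hBe : x ⬝ᵥ B *ᵥ x ≤ e := hB.dotProduct_mulVec_le_trace_mul x
    have hAB' : x ⬝ᵥ A *ᵥ x - x ⬝ᵥ B *ᵥ x ≤ (maxRatio A B - 1) * e := by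
      have := dotProduct_mulVec_le_maxRatio_mul htr hB0 hAB x
      nlinarith [mul_le_mul_of_nonneg_left hBe (sub_nonneg.mpr hM)]
    have hBA' : x ⬝ᵥ B *ᵥ x - x ⬝ᵥ A *ᵥ x ≤ (maxRatio B A - 1) * e := by
      have := dotProduct_mulVec_le_maxRatio_mul htr.symm hA0 hBA x
      nlinarith [mul_le_mul_of_nonneg_left hAe (sub_nonneg.mpr hM')]
    have he : 0 ≤ e := (hB.dotProduct_mulVec_nonneg x).trans hBe
    have h₁ : (maxRatio A B - 1) * e ≤ hilbertGap A B * e := by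
      unfold hilbertGap; gcongr; nlinarith
    have h₂ : (maxRatio B A - 1) * e ≤ hilbertGap A B * e := by
      unfold hilbertGap; gcongr; nlinarith
    rw [sub_mulVec, dotProduct_sub, abs_le, mul_assoc, mul_left_comm]
    constructor <;> linarith
  rw [dist_eq_norm]
  refine (Matrix.norm_le_iff (by positivity)).mpr fun i j => ?_
  exact (hA.isHermitian.sub hB.isHermitian).abs_apply_le hquad i j

end SupNorm

end HilbertGap

section GapContraction

variable {X : Type*} {f : X → X} {S : Set X} {u : X → X → ℝ} {θ : ℝ}

theorem gap_iterate_le (hS : Set.MapsTo f S S) (hθ : 0 ≤ θ)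
    (hu : ∀ x ∈ S, ∀ y ∈ S, u (f x) (f y) ≤ θ * u x y) {x y : X} (hx : x ∈ S) (hy : y ∈ S)
    (k : ℕ) : u (f^[k] x) (f^[k] y) ≤ θ ^ k * u x y := by
  induction k with
  | zero => simp
  | succ k ih =>
    rw [Function.iterate_succ_apply', Function.iterate_succ_apply', pow_succ', mul_assoc]
    exact (hu _ (hS.iterate k hx) _ (hS.iterate k hy)).trans (mul_le_mul_of_nonneg_left ih hθ)

theorem exists_forall_tendsto_iterate_of_gap_contracting [PseudoMetricSpace X] [CompleteSpace X]
    (hS : Set.MapsTo f S S) (hθ0 : 0 ≤ θ) (hθ1 : θ < 1)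
    (hu : ∀ x ∈ S, ∀ y ∈ S, u (f x) (f y) ≤ θ * u x y)
    (hdist : ∀ x ∈ S, ∀ y ∈ S, dist x y ≤ u x y) {a : X} (ha : a ∈ S) :
    ∃ L, ∀ x ∈ S, Tendsto (fun k => f^[k] x) atTop (𝓝 L) := by
  have horbit : ∀ x ∈ S, ∀ y ∈ S, ∀ k, dist (f^[k] x) (f^[k] y) ≤ u x y * θ ^ k :=
    fun x hx y hy k => (hdist _ (hS.iterate k hx) _ (hS.iterate k hy)).trans <|
      (gap_iterate_le hS hθ0 hu hx hy k).trans_eq (mul_comm _ _)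
  have hcauchy : CauchySeq fun k => f^[k] a :=
    cauchySeq_of_le_geometric θ (u a (f a)) hθ1 fun k => by
      simpa only [Function.iterate_succ_apply] using horbit a ha (f a) (hS ha) k
  obtain ⟨L, hL⟩ := cauchySeq_tendsto_of_complete hcauchy
  refine ⟨L, fun x hx => hL.congr_dist (squeeze_zero (fun _ => dist_nonneg) (horbit a ha x hx) ?_)⟩
  simpa using (tendsto_pow_atTop_nhds_zero_of_lt_one hθ0 hθ1).const_mul (u a x)

end GapContraction

section Tyler

variable {p n : ℕ} {s : Fin n → Fin p → ℝ} {ρ : ℝ}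

variable (s ρ) in
theorem dotProduct_tylerMap_mulVec (A : Matrix (Fin p) (Fin p) ℝ) (x : Fin p → ℝ) :
    x ⬝ᵥ tylerMap s ρ A *ᵥ x =
      (1 - ρ) * (p / n) * ∑ i, (s i ⬝ᵥ x) ^ 2 / (s i ⬝ᵥ A⁻¹ *ᵥ s i) + ρ * (x ⬝ᵥ x) := by
  simp only [tylerMap, add_mulVec, smul_mulVec, sum_mulVec, vecMulVec_mulVec, dotProduct_add,
    dotProduct_smul, dotProduct_sum, one_mulVec, smul_eq_mul]
  simp [dotProduct_comm x, div_eq_mul_inv, sq, mul_comm, Finset.mul_sum]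

variable (s ρ) in
theorem isHermitian_tylerMap (A : Matrix (Fin p) (Fin p) ℝ) : (tylerMap s ρ A).IsHermitian :=
  IsHermitian.ext fun i j => by
    simp [tylerMap, vecMulVec_apply, Matrix.sum_apply, one_apply, mul_comm, eq_comm]

theorem mul_dotProduct_self_le_tylerMap (hρ1 : ρ ≤ 1) {A : Matrix (Fin p) (Fin p) ℝ}
    (hA : A.PosDef) (x : Fin p → ℝ) : ρ * (x ⬝ᵥ x) ≤ x ⬝ᵥ tylerMap s ρ A *ᵥ x := by
  have hd : ∀ i, 0 ≤ s i ⬝ᵥ A⁻¹ *ᵥ s i := fun i => by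
    simpa using hA.inv.posSemidef.dotProduct_mulVec_nonneg (s i)
  have hρ : 0 ≤ 1 - ρ := sub_nonneg.mpr hρ1
  rw [dotProduct_tylerMap_mulVec, le_add_iff_nonneg_left]
  exact mul_nonneg (by positivity) (Finset.sum_nonneg fun i _ => div_nonneg (sq_nonneg _) (hd i))

theorem dotProduct_tylerMap_mulVec_le (hs : ∀ i, s i ⬝ᵥ s i = 1) (hρ1 : ρ ≤ 1)
    {A : Matrix (Fin p) (Fin p) ℝ} (hA : A.PosDef) (htr : A.trace = p) (x : Fin p → ℝ) :
    x ⬝ᵥ tylerMap s ρ A *ᵥ x ≤ ((1 - ρ) * p ^ 2 + ρ) * (x ⬝ᵥ x) := by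
  have hx := dotProduct_self_star_nonneg x
  simp only [star_trivial] at hx
  have hterm : ∀ i, (s i ⬝ᵥ x) ^ 2 / (s i ⬝ᵥ A⁻¹ *ᵥ s i) ≤ p * (x ⬝ᵥ x) := fun i => by
    have hw := hA.inv_dotProduct_inv_mulVec_le_trace (hs i)
    have hsx := sq_dotProduct_le (s i) x
    rw [htr] at hw
    rw [hs i, one_mul] at hsx
    rw [div_eq_mul_inv, mul_comm (p : ℝ)]
    exact mul_le_mul hsx hw (inv_nonneg.mpr (hA.inv.posSemidef.dotProduct_mulVec_nonneg _)) hx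
  have hpn : (p : ℝ) / n * n ≤ p := by
    rcases eq_or_ne (n : ℝ) 0 with hn | hn
    · simp [hn]
    · rw [div_mul_cancel₀ _ hn]
  have hsum : ∑ i, (s i ⬝ᵥ x) ^ 2 / (s i ⬝ᵥ A⁻¹ *ᵥ s i) ≤ n * (p * (x ⬝ᵥ x)) := by
    simpa using Finset.sum_le_sum fun i (_ : i ∈ Finset.univ) => hterm i
  have hρ : 0 ≤ 1 - ρ := sub_nonneg.mpr hρ1
  calc x ⬝ᵥ tylerMap s ρ A *ᵥ x
      ≤ (1 - ρ) * (p / n) * (n * (p * (x ⬝ᵥ x))) + ρ * (x ⬝ᵥ x) := by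
        rw [dotProduct_tylerMap_mulVec]; gcongr
    _ = (1 - ρ) * (p / n * n) * p * (x ⬝ᵥ x) + ρ * (x ⬝ᵥ x) := by ring
    _ ≤ (1 - ρ) * p * p * (x ⬝ᵥ x) + ρ * (x ⬝ᵥ x) := by gcongr
    _ = ((1 - ρ) * p ^ 2 + ρ) * (x ⬝ᵥ x) := by ring

theorem tylerMap_sub_le_mul {A B : Matrix (Fin p) (Fin p) ℝ} (hρ1 : ρ ≤ 1) (hA : A.PosDef)
    (hB : B.PosDef) {M : ℝ} (hM : 0 < M) (hAB : ∀ x, x ⬝ᵥ A *ᵥ x ≤ M * (x ⬝ᵥ B *ᵥ x))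
    (x : Fin p → ℝ) :
    x ⬝ᵥ tylerMap s ρ A *ᵥ x - ρ * (x ⬝ᵥ x) ≤
      M * (x ⬝ᵥ tylerMap s ρ B *ᵥ x - ρ * (x ⬝ᵥ x)) := by
  have hρ : 0 ≤ 1 - ρ := sub_nonneg.mpr hρ1
  have hweight : ∀ i, (s i ⬝ᵥ x) ^ 2 / (s i ⬝ᵥ A⁻¹ *ᵥ s i) ≤
      M * ((s i ⬝ᵥ x) ^ 2 / (s i ⬝ᵥ B⁻¹ *ᵥ s i)) := fun i => by
    rcases eq_or_ne (s i) 0 with hsi | hsi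
    · simp [hsi]
    have hdA := hA.inv.dotProduct_mulVec_pos hsi
    have hdB := hB.inv.dotProduct_mulVec_pos hsi
    simp only [star_trivial] at hdA hdB
    rw [mul_div_assoc', div_le_div_iff₀ hdA hdB, mul_comm M, mul_assoc]
    exact mul_le_mul_of_nonneg_left (hA.dotProduct_inv_mulVec_le hB hM hAB (s i)) (sq_nonneg _)
  simp only [dotProduct_tylerMap_mulVec, add_sub_cancel_right, Finset.mul_sum, mul_left_comm M]
  gcongr with i
  exact hweight i

noncomputable def tylerRate (p : ℕ) (ρ : ℝ) : ℝ := (1 - ρ) * p ^ 2 / ((1 - ρ) * p ^ 2 + ρ)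

variable (p) in
theorem tylerRate_nonneg (hρ0 : 0 ≤ ρ) (hρ1 : ρ ≤ 1) : 0 ≤ tylerRate p ρ := by
  have := sub_nonneg.mpr hρ1
  unfold tylerRate; positivity

variable (p) in
theorem tylerRate_lt_one (hρ0 : 0 < ρ) (hρ1 : ρ ≤ 1) : tylerRate p ρ < 1 := by
  have := sub_nonneg.mpr hρ1
  rw [tylerRate, div_lt_one (by positivity)]
  linarith

theorem dotProduct_tylerMap_mulVec_le_mul (hs : ∀ i, s i ⬝ᵥ s i = 1) (hρ0 : 0 < ρ) (hρ1 : ρ ≤ 1)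
    {A B : Matrix (Fin p) (Fin p) ℝ} (hA : A.PosDef) (hB : B.PosDef) (hBtr : B.trace = p)
    {M : ℝ} (hM : 1 ≤ M) (hAB : ∀ x, x ⬝ᵥ A *ᵥ x ≤ M * (x ⬝ᵥ B *ᵥ x)) (x : Fin p → ℝ) :
    x ⬝ᵥ tylerMap s ρ A *ᵥ x ≤ (1 + tylerRate p ρ * (M - 1)) * (x ⬝ᵥ tylerMap s ρ B *ᵥ x) := by
  have hρ := sub_nonneg.mpr hρ1
  have hq : 0 < (1 - ρ) * p ^ 2 + ρ := by positivity
  have hsub := tylerMap_sub_le_mul (s := s) hρ1 hA hB (by linarith) hAB x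
  have hupper := dotProduct_tylerMap_mulVec_le hs hρ1 hB hBtr x
  set e := x ⬝ᵥ x
  set b := x ⬝ᵥ tylerMap s ρ B *ᵥ x
  -- with `q = (1 - ρ) p²`, the bound `T(B) ≤ (q + ρ) I` lets the excess `(M - 1) ρ I` absorb
  -- all but the fraction `q / (q + ρ)` of `(M - 1) T(B)`
  calc x ⬝ᵥ tylerMap s ρ A *ᵥ x ≤ M * b - (M - 1) * ρ * e := by linarith
    _ ≤ M * b - (M - 1) * ρ * e + (M - 1) * ρ * (((1 - ρ) * p ^ 2 + ρ) * e - b) /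
          ((1 - ρ) * p ^ 2 + ρ) := by
        have : 0 ≤ M - 1 := by linarith
        have : 0 ≤ ((1 - ρ) * p ^ 2 + ρ) * e - b := by linarith
        simp only [le_add_iff_nonneg_right]
        positivity
    _ = (1 + tylerRate p ρ * (M - 1)) * b := by
        unfold tylerRate; field_simp; ring

theorem trace_tylerMap_pos (hp : 0 < p) (hρ0 : 0 < ρ) (hρ1 : ρ ≤ 1)
    {A : Matrix (Fin p) (Fin p) ℝ} (hA : A.PosDef) : 0 < (tylerMap s ρ A).trace := by
  rw [trace_eq_sum_dotProduct_mulVec_single]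
  have : Nonempty (Fin p) := ⟨⟨0, hp⟩⟩
  refine Finset.sum_pos (fun j _ => ?_) Finset.univ_nonempty
  exact (mul_pos hρ0 (by simp)).trans_le (mul_dotProduct_self_le_tylerMap hρ1 hA _)

theorem trace_tylerMap_le (hs : ∀ i, s i ⬝ᵥ s i = 1) (hρ1 : ρ ≤ 1)
    {A : Matrix (Fin p) (Fin p) ℝ} (hA : A.PosDef) (htr : A.trace = p) :
    (tylerMap s ρ A).trace ≤ p * ((1 - ρ) * p ^ 2 + ρ) := by
  rw [trace_eq_sum_dotProduct_mulVec_single]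
  calc _ ≤ ∑ _j : Fin p, ((1 - ρ) * p ^ 2 + ρ) := Finset.sum_le_sum fun j _ => by
        simpa using dotProduct_tylerMap_mulVec_le hs hρ1 hA htr (Pi.single j 1)
    _ = p * ((1 - ρ) * p ^ 2 + ρ) := by
        rw [Finset.sum_const, Finset.card_univ, Fintype.card_fin, nsmul_eq_mul]

variable (s ρ) in
theorem dotProduct_tylerIter_mulVec (A : Matrix (Fin p) (Fin p) ℝ) (x : Fin p → ℝ) :
    x ⬝ᵥ tylerIter s ρ A *ᵥ x = p / (tylerMap s ρ A).trace * (x ⬝ᵥ tylerMap s ρ A *ᵥ x) := by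
  rw [tylerIter, smul_mulVec, dotProduct_smul, smul_eq_mul]

theorem trace_tylerIter (hp : 0 < p) (hρ0 : 0 < ρ) (hρ1 : ρ ≤ 1)
    {A : Matrix (Fin p) (Fin p) ℝ} (hA : A.PosDef) : (tylerIter s ρ A).trace = p := by
  rw [tylerIter, trace_smul, smul_eq_mul, div_mul_cancel₀ _ (trace_tylerMap_pos hp hρ0 hρ1 hA).ne']

theorem isHermitian_tylerIter (A : Matrix (Fin p) (Fin p) ℝ) : (tylerIter s ρ A).IsHermitian :=
  (isHermitian_tylerMap s ρ A).smul (IsSelfAdjoint.all _)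

theorem posDef_tylerIter (hp : 0 < p) (hρ0 : 0 < ρ) (hρ1 : ρ ≤ 1)
    {A : Matrix (Fin p) (Fin p) ℝ} (hA : A.PosDef) : (tylerIter s ρ A).PosDef := by
  have ht := trace_tylerMap_pos (s := s) hp hρ0 hρ1 hA
  refine (isHermitian_tylerIter A).posDef_of_forall_mul_dotProduct_self_le
    (c := p / (tylerMap s ρ A).trace * ρ) (by positivity) fun x => ?_
  rw [dotProduct_tylerIter_mulVec, mul_assoc]
  gcongr
  exact mul_dotProduct_self_le_tylerMap hρ1 hA x

end Tyler

def coerciveTraceSlice (p : ℕ) (c : ℝ) : Set (Matrix (Fin p) (Fin p) ℝ) :=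
  {A | A.IsHermitian ∧ A.trace = p ∧ ∀ x, c * (x ⬝ᵥ x) ≤ x ⬝ᵥ A *ᵥ x}

section CoerciveTraceSlice

variable {p : ℕ} {c : ℝ} {A B : Matrix (Fin p) (Fin p) ℝ}

theorem isClosed_coerciveTraceSlice (p : ℕ) (c : ℝ) : IsClosed (coerciveTraceSlice p c) := by
  have hcoercive : IsClosed {A : Matrix (Fin p) (Fin p) ℝ | ∀ x, c * (x ⬝ᵥ x) ≤ x ⬝ᵥ A *ᵥ x} := by
    simp only [Set.ofPred_forall]
    exact isClosed_iInter fun x => isClosed_le continuous_const (by fun_prop)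
  exact (isClosed_eq (by fun_prop) continuous_id).inter
    ((isClosed_eq (by fun_prop) continuous_const).inter hcoercive)

theorem posDef_of_mem_coerciveTraceSlice (hc : 0 < c) (hA : A ∈ coerciveTraceSlice p c) :
    A.PosDef :=
  hA.1.posDef_of_forall_mul_dotProduct_self_le hc hA.2.2

theorem exists_forall_le_mul_of_mem_coerciveTraceSlice (hc : 0 < c)
    (hA : A ∈ coerciveTraceSlice p c) (hB : B ∈ coerciveTraceSlice p c) :
    ∃ M, ∀ x, x ⬝ᵥ A *ᵥ x ≤ M * (x ⬝ᵥ B *ᵥ x) := by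
  refine ⟨p / c, fun x => ?_⟩
  have hAx := (posDef_of_mem_coerciveTraceSlice hc hA).posSemidef.dotProduct_mulVec_le_trace_mul x
  rw [hA.2.1] at hAx
  calc x ⬝ᵥ A *ᵥ x ≤ p * (x ⬝ᵥ x) := hAx
    _ = p / c * (c * (x ⬝ᵥ x)) := by field_simp
    _ ≤ p / c * (x ⬝ᵥ B *ᵥ x) := by gcongr; exact hB.2.2 x

end CoerciveTraceSlice

section TylerContraction

variable {p n : ℕ} {s : Fin n → Fin p → ℝ} {ρ : ℝ}

theorem tylerIter_mem_coerciveTraceSlice (hs : ∀ i, s i ⬝ᵥ s i = 1) (hp : 0 < p) (hρ0 : 0 < ρ)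
    (hρ1 : ρ ≤ 1) {A : Matrix (Fin p) (Fin p) ℝ} (hA : A.PosDef) (htr : A.trace = p) :
    tylerIter s ρ A ∈ coerciveTraceSlice p (ρ / ((1 - ρ) * p ^ 2 + ρ)) := by
  refine ⟨isHermitian_tylerIter A, trace_tylerIter hp hρ0 hρ1 hA, fun x => ?_⟩
  have ht := trace_tylerMap_pos (s := s) hp hρ0 hρ1 hA
  have htle := trace_tylerMap_le hs hρ1 hA htr
  have hx := dotProduct_self_star_nonneg x
  simp only [star_trivial] at hx
  have hρ := sub_nonneg.mpr hρ1
  rw [dotProduct_tylerIter_mulVec]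
  calc ρ / ((1 - ρ) * p ^ 2 + ρ) * (x ⬝ᵥ x) = p / (p * ((1 - ρ) * p ^ 2 + ρ)) * (ρ * (x ⬝ᵥ x)) := by
        field_simp
    _ ≤ p / (tylerMap s ρ A).trace * (x ⬝ᵥ tylerMap s ρ A *ᵥ x) := by
        gcongr
        exact mul_dotProduct_self_le_tylerMap hρ1 hA x

theorem dotProduct_tylerIter_mulVec_le_mul (hs : ∀ i, s i ⬝ᵥ s i = 1) (hp : 0 < p) (hρ0 : 0 < ρ)
    (hρ1 : ρ ≤ 1) {A B : Matrix (Fin p) (Fin p) ℝ} (hA : A.PosDef) (hB : B.PosDef)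
    (hBtr : B.trace = p) {M : ℝ} (hM : 1 ≤ M) (hAB : ∀ x, x ⬝ᵥ A *ᵥ x ≤ M * (x ⬝ᵥ B *ᵥ x))
    (x : Fin p → ℝ) :
    x ⬝ᵥ tylerIter s ρ A *ᵥ x ≤ (1 + tylerRate p ρ * (M - 1)) *
      ((tylerMap s ρ B).trace / (tylerMap s ρ A).trace) * (x ⬝ᵥ tylerIter s ρ B *ᵥ x) := by
  have htA := trace_tylerMap_pos (s := s) hp hρ0 hρ1 hA
  have htB := trace_tylerMap_pos (s := s) hp hρ0 hρ1 hB
  rw [dotProduct_tylerIter_mulVec, dotProduct_tylerIter_mulVec]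
  calc p / (tylerMap s ρ A).trace * (x ⬝ᵥ tylerMap s ρ A *ᵥ x)
      ≤ p / (tylerMap s ρ A).trace *
          ((1 + tylerRate p ρ * (M - 1)) * (x ⬝ᵥ tylerMap s ρ B *ᵥ x)) := by
        gcongr
        exact dotProduct_tylerMap_mulVec_le_mul hs hρ0 hρ1 hA hB hBtr hM hAB x
    _ = _ := by field_simp

theorem hilbertGap_tylerIter_le_of_forall_le (hs : ∀ i, s i ⬝ᵥ s i = 1) (hp : 0 < p)
    (hρ0 : 0 < ρ) (hρ1 : ρ ≤ 1) {A B : Matrix (Fin p) (Fin p) ℝ} (hA : A.PosDef) (hB : B.PosDef)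
    (hAtr : A.trace = p) (hBtr : B.trace = p) {M M' : ℝ} (hM : 1 ≤ M) (hM' : 1 ≤ M')
    (hAB : ∀ x, x ⬝ᵥ A *ᵥ x ≤ M * (x ⬝ᵥ B *ᵥ x)) (hBA : ∀ x, x ⬝ᵥ B *ᵥ x ≤ M' * (x ⬝ᵥ A *ᵥ x)) :
    hilbertGap (tylerIter s ρ A) (tylerIter s ρ B) ≤
      (1 + tylerRate p ρ * (M - 1)) * (1 + tylerRate p ρ * (M' - 1)) - 1 := by
  have htA := trace_tylerMap_pos (s := s) hp hρ0 hρ1 hA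
  have htB := trace_tylerMap_pos (s := s) hp hρ0 hρ1 hB
  have htr : (tylerIter s ρ A).trace = (tylerIter s ρ B).trace := by
    rw [trace_tylerIter hp hρ0 hρ1 hA, trace_tylerIter hp hρ0 hρ1 hB]
  have hBt : 0 < (tylerIter s ρ B).trace :=
    trace_tylerIter hp hρ0 hρ1 hB ▸ Nat.cast_pos.mpr hp
  calc hilbertGap (tylerIter s ρ A) (tylerIter s ρ B)
      ≤ (1 + tylerRate p ρ * (M - 1)) * ((tylerMap s ρ B).trace / (tylerMap s ρ A).trace) *
        ((1 + tylerRate p ρ * (M' - 1)) * ((tylerMap s ρ A).trace / (tylerMap s ρ B).trace)) - 1 :=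
        hilbertGap_le htr hBt
          (dotProduct_tylerIter_mulVec_le_mul hs hp hρ0 hρ1 hA hB hBtr hM hAB)
          (dotProduct_tylerIter_mulVec_le_mul hs hp hρ0 hρ1 hB hA hAtr hM' hBA)
    _ = (1 + tylerRate p ρ * (M - 1)) * (1 + tylerRate p ρ * (M' - 1)) - 1 := by field_simp

theorem hilbertGap_tylerIter_le (hs : ∀ i, s i ⬝ᵥ s i = 1) (hp : 0 < p) (hρ0 : 0 < ρ)
    (hρ1 : ρ ≤ 1) {c : ℝ} (hc : 0 < c) {A B : Matrix (Fin p) (Fin p) ℝ}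
    (hA : A ∈ coerciveTraceSlice p c) (hB : B ∈ coerciveTraceSlice p c) :
    hilbertGap (tylerIter s ρ A) (tylerIter s ρ B) ≤ tylerRate p ρ * hilbertGap A B := by
  have htr : A.trace = B.trace := hA.2.1.trans hB.2.1.symm
  have hBt : 0 < B.trace := hB.2.1 ▸ Nat.cast_pos.mpr hp
  have hAt : 0 < A.trace := htr ▸ hBt
  have hAB := exists_forall_le_mul_of_mem_coerciveTraceSlice hc hA hB
  have hBA := exists_forall_le_mul_of_mem_coerciveTraceSlice hc hB hA
  have hM := one_le_maxRatio htr hBt hAB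
  have hM' := one_le_maxRatio htr.symm hAt hBA
  have hθ0 := tylerRate_nonneg p hρ0.le hρ1
  have hθ1 := (tylerRate_lt_one p hρ0 hρ1).le
  refine (hilbertGap_tylerIter_le_of_forall_le hs hp hρ0 hρ1
    (posDef_of_mem_coerciveTraceSlice hc hA) (posDef_of_mem_coerciveTraceSlice hc hB) hA.2.1
    hB.2.1 hM hM' (dotProduct_mulVec_le_maxRatio_mul htr hBt hAB)
    (dotProduct_mulVec_le_maxRatio_mul htr.symm hAt hBA)).trans ?_
  unfold hilbertGap
  nlinarith [mul_le_mul_of_nonneg_right (mul_le_of_le_one_left hθ0 hθ1)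
    (mul_nonneg (sub_nonneg.2 hM) (sub_nonneg.2 hM'))]

theorem mapsTo_tylerIter_coerciveTraceSlice (hs : ∀ i, s i ⬝ᵥ s i = 1) (hp : 0 < p)
    (hρ0 : 0 < ρ) (hρ1 : ρ ≤ 1) :
    Set.MapsTo (tylerIter s ρ) (coerciveTraceSlice p (ρ / ((1 - ρ) * p ^ 2 + ρ)))
      (coerciveTraceSlice p (ρ / ((1 - ρ) * p ^ 2 + ρ))) := fun A hA =>
  have hc : 0 < ρ / ((1 - ρ) * p ^ 2 + ρ) := by have := sub_nonneg.mpr hρ1; positivity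
  tylerIter_mem_coerciveTraceSlice hs hp hρ0 hρ1 (posDef_of_mem_coerciveTraceSlice hc hA) hA.2.1

section SupNorm

attribute [local instance] Matrix.normedAddCommGroup Matrix.normedSpace

theorem exists_forall_tendsto_tylerIter (hs : ∀ i, s i ⬝ᵥ s i = 1) (hp : 0 < p) (hρ0 : 0 < ρ)
    (hρ1 : ρ ≤ 1) :
    ∃ L, ∀ A ∈ coerciveTraceSlice p (ρ / ((1 - ρ) * p ^ 2 + ρ)),
      Tendsto (fun k => (tylerIter s ρ)^[k] A) atTop (𝓝 L) := by
  have hc : 0 < ρ / ((1 - ρ) * p ^ 2 + ρ) := by have := sub_nonneg.mpr hρ1; positivity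
  refine exists_forall_tendsto_iterate_of_gap_contracting
    (mapsTo_tylerIter_coerciveTraceSlice hs hp hρ0 hρ1) (u := fun A B => p * hilbertGap A B)
    (tylerRate_nonneg p hρ0.le hρ1) (tylerRate_lt_one p hρ0 hρ1) (fun A hA B hB => ?_)
    (fun A hA B hB => ?_) (tylerIter_mem_coerciveTraceSlice hs hp hρ0 hρ1 PosDef.one (by simp))
  · rw [mul_left_comm]
    exact mul_le_mul_of_nonneg_left (hilbertGap_tylerIter_le hs hp hρ0 hρ1 hc hA hB) p.cast_nonneg
  · have hBt : 0 < B.trace := hB.2.1 ▸ Nat.cast_pos.mpr hp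
    simpa only [hB.2.1] using dist_le_trace_mul_hilbertGap
      (posDef_of_mem_coerciveTraceSlice hc hA).posSemidef
      (posDef_of_mem_coerciveTraceSlice hc hB).posSemidef (hA.2.1.trans hB.2.1.symm) hBt
      (exists_forall_le_mul_of_mem_coerciveTraceSlice hc hA hB)
      (exists_forall_le_mul_of_mem_coerciveTraceSlice hc hB hA)

end SupNorm

end TylerContraction

theorem tyler_iteration_converges_general {p n : ℕ} (hp : 0 < p)
    (s : Fin n → Fin p → ℝ) (hs : ∀ i, s i ⬝ᵥ s i = 1)
    (ρ : ℝ) (hρ0 : 0 < ρ) (hρ1 : ρ < 1) :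
    ∃! L : Matrix (Fin p) (Fin p) ℝ, L.PosDef ∧ L.trace = (p : ℝ) ∧
      ∀ A₀ : Matrix (Fin p) (Fin p) ℝ, A₀.PosDef →
        Tendsto (fun k => (tylerIter s ρ)^[k] A₀) atTop (𝓝 L) := by
  set S := coerciveTraceSlice p (ρ / ((1 - ρ) * p ^ 2 + ρ))
  have hc : 0 < ρ / ((1 - ρ) * p ^ 2 + ρ) := by have := sub_pos.mpr hρ1; positivity
  have hentry : ∀ A₀ : Matrix (Fin p) (Fin p) ℝ, A₀.PosDef → (tylerIter s ρ)^[2] A₀ ∈ S :=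
    fun A₀ hA₀ => tylerIter_mem_coerciveTraceSlice hs hp hρ0 hρ1.le
      (posDef_tylerIter hp hρ0 hρ1.le hA₀) (trace_tylerIter hp hρ0 hρ1.le hA₀)
  obtain ⟨L, hL⟩ := exists_forall_tendsto_tylerIter hs hp hρ0 hρ1.le
  have hconv : ∀ A₀ : Matrix (Fin p) (Fin p) ℝ, A₀.PosDef →
      Tendsto (fun k => (tylerIter s ρ)^[k] A₀) atTop (𝓝 L) := fun A₀ hA₀ =>
    (tendsto_add_atTop_iff_nat 2).mp <| by
      simpa only [Function.iterate_add_apply] using hL _ (hentry A₀ hA₀)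
  have hLS : L ∈ S := (isClosed_coerciveTraceSlice _ _).mem_of_tendsto
    (hL _ (hentry 1 PosDef.one)) <| Eventually.of_forall fun k =>
      (mapsTo_tylerIter_coerciveTraceSlice hs hp hρ0 hρ1.le).iterate k (hentry 1 PosDef.one)
  exact ⟨L, ⟨posDef_of_mem_coerciveTraceSlice hc hLS, hLS.2.1, hconv⟩, fun L' hL' =>
    tendsto_nhds_unique (hL'.2.2 1 PosDef.one) (hconv 1 PosDef.one)⟩

/-- **Theorem 1.** For `0 < ρ < 1`, the normalized regularized Tyler iteration converges to a
unique positive definite limit of trace `p`, independently of the positive definite initial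
matrix. -/
theorem tyler_iteration_converges {p n : ℕ} (hp : 0 < p) (hn : 0 < n)
    (s : Fin n → Fin p → ℝ) (hs : ∀ i, s i ⬝ᵥ s i = 1)
    (ρ : ℝ) (hρ0 : 0 < ρ) (hρ1 : ρ < 1) :
    ∃! L : Matrix (Fin p) (Fin p) ℝ, L.PosDef ∧ L.trace = (p : ℝ) ∧
      ∀ A₀ : Matrix (Fin p) (Fin p) ℝ, A₀.PosDef →
        Tendsto (fun k => (tylerIter s ρ)^[k] A₀) atTop (𝓝 L) :=
  tyler_iteration_converges_general hp s hs ρ hρ0 hρ1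
end

section
/- Let z₁,…,zₙ be i.i.d. uniform on the unit sphere of R^p and D a fixed symmetric p×p matrix, and set C̃ = (p/n) Λ (Σᵢ zᵢ zᵢ^T) Λ^T where Λ Λ^T has the same spectrum as D (i.e., Λ^T Λ = D). Then E[Tr(C̃²)] = (1 - 1/n + 2/(n(1+2/p))) Tr(D²) + Tr(D)²/(n(1+2/p)). -/
open Matrix MeasureTheory Finset

/-!
Cycling the trace and using `ΛᵀΛ = D` gives `Tr(C̃²) = (p/n)² ∑ᵢⱼ (zᵢᵀ D zⱼ)²`. Every moment
needed afterwards follows from orthogonal invariance of the law of `z` together with `|z|² = 1`: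
coordinate sign flips kill the odd moments, the reflection in the rational unit vector
`(3/5) e_a + (4/5) e_b` shows `E z_a⁴ = 3 E z_a² z_b²`, and summing over coordinates fixes
`E z_a² = 1/p` and `E z_a² z_b² = (1 + 2δ_ab)/(p(p+2))`. Hence `E zᵀAz = Tr A / p`, and, after
diagonalising a symmetric `A` by an orthogonal matrix, `E (zᵀAz)² = (2 Tr A² + (Tr A)²)/(p(p+2))`.
The diagonal terms `i = j` contribute the latter; for `i ≠ j`, independence and two applications
of the former give `E (zᵢᵀ D zⱼ)² = Tr D² / p²`.
-/

lemma integral_sum_sum_mul {X κ : Type*} [MeasurableSpace X] [Fintype κ] {μ : Measure X}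
    (c : κ → κ → ℝ) {f : κ → κ → X → ℝ} (hf : ∀ a b, Integrable (f a b) μ) :
    ∫ x, ∑ a, ∑ b, c a b * f a b x ∂μ = ∑ a, ∑ b, c a b * ∫ x, f a b x ∂μ := by
  rw [integral_finsetSum _ fun a _ => integrable_finsetSum _ fun b _ => (hf a b).const_mul _]
  refine sum_congr rfl fun a _ => ?_
  rw [integral_finsetSum _ fun b _ => (hf a b).const_mul _]
  simp only [integral_const_mul]

lemma sum_sum_ite_eq_const {κ R : Type*} [Fintype κ] [DecidableEq κ] [CommRing R] (a b : R) :
    ∑ i : κ, ∑ j : κ, (if i = j then a else b) =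
      Fintype.card κ * a + (Fintype.card κ ^ 2 - Fintype.card κ) * b := by
  have hsplit : ∀ i j : κ, (if i = j then a else b) = b + if i = j then a - b else 0 :=
    fun i j => by split_ifs <;> ring
  simp only [hsplit, sum_add_distrib, sum_ite_eq, mem_univ, if_true, sum_const, card_univ,
    nsmul_eq_mul]
  ring

lemma Continuous.integrable_of_ae_mem_isCompact {X E : Type*} [TopologicalSpace X] [T2Space X]
    [MeasurableSpace X] [OpensMeasurableSpace X] [NormedAddCommGroup E]
    {μ : Measure X} [IsFiniteMeasure μ] {K : Set X} (hK : IsCompact K) (hμ : ∀ᵐ x ∂μ, x ∈ K)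
    {f : X → E} (hf : Continuous f) : Integrable f μ := by
  simpa [IntegrableOn, Measure.restrict_eq_self_of_ae_mem hμ] using
    hf.continuousOn.integrableOn_compact (μ := μ) hK

lemma measurePreserving_eval_prodMk_eval {κ : Type*} [Fintype κ] {X : κ → Type*}
    [∀ i, MeasurableSpace (X i)] (μ : ∀ i, Measure (X i)) [∀ i, IsProbabilityMeasure (μ i)]
    {i j : κ} (hij : i ≠ j) :
    MeasurePreserving (fun x => (x i, x j)) (Measure.pi μ) ((μ i).prod (μ j)) := by
  refine ⟨by fun_prop, ?_⟩
  have hind := (ProbabilityTheory.iIndepFun_pi (μ := μ) (X := fun i (x : X i) => x)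
    fun i => aemeasurable_id).indepFun hij
  rw [hind.map_prod_eq_prod_map_map (measurable_pi_apply i).aemeasurable
      (measurable_pi_apply j).aemeasurable,
    (measurePreserving_eval μ i).map_eq, (measurePreserving_eval μ j).map_eq]

section SymmetricMatrix
variable {n : Type*} [Fintype n]

lemma Matrix.IsSymm.dotProduct_mulVec_comm {A : Matrix n n ℝ} (hA : A.IsSymm) (x y : n → ℝ) :
    x ⬝ᵥ A *ᵥ y = y ⬝ᵥ A *ᵥ x := by
  rw [dotProduct_mulVec, ← mulVec_transpose, hA.eq, dotProduct_comm]

lemma trace_vecMulVec_mul_vecMulVec_mul {D : Matrix n n ℝ} (hD : D.IsSymm) (x y : n → ℝ) :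
    (vecMulVec x x * D * (vecMulVec y y * D)).trace = (x ⬝ᵥ D *ᵥ y) ^ 2 := by
  rw [Matrix.mul_assoc, vecMulVec_mul, vecMulVec_mul, trace_vecMulVec, mul_vecMulVec,
    vecMul_vecMulVec, dotProduct_smul, dotProduct_comm x (y ᵥ* D), ← dotProduct_mulVec,
    hD.dotProduct_mulVec_comm y x, smul_eq_mul, sq]

lemma trace_sum_vecMulVec_mul_sq {κ : Type*} [Fintype κ] {D : Matrix n n ℝ} (hD : D.IsSymm)
    (z : κ → n → ℝ) :
    ((∑ i, vecMulVec (z i) (z i)) * D * ((∑ i, vecMulVec (z i) (z i)) * D)).trace =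
      ∑ i, ∑ j, (z i ⬝ᵥ D *ᵥ z j) ^ 2 := by
  simp only [sum_mul, mul_sum, trace_sum, trace_vecMulVec_mul_vecMulVec_mul hD]
  exact sum_comm

lemma trace_conj_mul_conj {m : Type*} [Fintype m] (Λ : Matrix m n ℝ) (S : Matrix n n ℝ) :
    (Λ * S * Λᵀ * (Λ * S * Λᵀ)).trace = (S * (Λᵀ * Λ) * (S * (Λᵀ * Λ))).trace := by
  rw [show Λ * S * Λᵀ * (Λ * S * Λᵀ) = Λ * (S * (Λᵀ * Λ) * S * Λᵀ) by
      simp only [Matrix.mul_assoc],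
    trace_mul_comm]
  simp only [Matrix.mul_assoc]

end SymmetricMatrix

section OrthogonalMatrix
variable {n : Type*} [Fintype n] [DecidableEq n]

def householder (v : n → ℝ) : Matrix n n ℝ := 1 - (2 : ℝ) • vecMulVec v v

lemma householder_mulVec (v z : n → ℝ) :
    householder v *ᵥ z = z - (2 * (v ⬝ᵥ z)) • v := by
  simp [householder, sub_mulVec, smul_mulVec, vecMulVec_mulVec, smul_smul]

lemma householder_mem_orthogonalGroup {v : n → ℝ} (hv : v ⬝ᵥ v = 1) :
    householder v ∈ orthogonalGroup n ℝ := by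
  have hT : (householder v)ᵀ = householder v := by
    simp [householder, transpose_vecMulVec]
  rw [mem_orthogonalGroup_iff, hT]
  simp only [householder, sub_mul, mul_sub, Matrix.smul_mul, Matrix.mul_smul, one_mul, mul_one,
    smul_smul, vecMulVec_mul_vecMulVec, hv, one_smul]
  module

lemma exists_orthogonal_mulVec_eq_update_neg (a : n) :
    ∃ O ∈ orthogonalGroup n ℝ, ∀ z, O *ᵥ z = Function.update z a (-z a) := by
  refine ⟨householder (Pi.single a 1), householder_mem_orthogonalGroup (by simp), fun z => ?_⟩
  ext b
  rcases eq_or_ne b a with rfl | hb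
  · simp [householder_mulVec, two_mul]
  · simp [householder_mulVec, hb]

/-- The reflection in the unit vector `(3/5) e_a + (4/5) e_b`, chosen for its rational entries. -/
lemma exists_orthogonal_mulVec_apply_mix {a b : n} (hab : a ≠ b) :
    ∃ O ∈ orthogonalGroup n ℝ, ∀ z,
      (O *ᵥ z) a = (7 * z a - 24 * z b) / 25 ∧ (O *ᵥ z) b = -(24 * z a + 7 * z b) / 25 := by
  set v : n → ℝ := (3 / 5 : ℝ) • Pi.single a 1 + (4 / 5 : ℝ) • Pi.single b 1
  have hv : ∀ z, v ⬝ᵥ z = 3 / 5 * z a + 4 / 5 * z b := fun z => by simp [v]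
  have hva : v a = 3 / 5 := by simp [v, hab]
  have hvb : v b = 4 / 5 := by simp [v, hab.symm]
  refine ⟨householder v, householder_mem_orthogonalGroup ?_, fun z => ?_⟩
  · rw [hv, hva, hvb]; norm_num
  · simp only [householder_mulVec, hv, Pi.sub_apply, Pi.smul_apply, smul_eq_mul, hva, hvb]
    constructor <;> ring

lemma Matrix.IsSymm.exists_eq_transpose_mul_diagonal_mul {A : Matrix n n ℝ} (hA : A.IsSymm) :
    ∃ O ∈ orthogonalGroup n ℝ, ∃ d : n → ℝ, A = Oᵀ * diagonal d * O := by
  have hH : A.IsHermitian := isHermitian_iff_isSymm.mpr hA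
  refine ⟨star (hH.eigenvectorUnitary : Matrix n n ℝ),
    Unitary.star_mem hH.eigenvectorUnitary.prop, hH.eigenvalues, ?_⟩
  conv_lhs => rw [hH.spectral_theorem]
  simp [star_eq_conjTranspose]

end OrthogonalMatrix

section Sphere
variable {ι : Type*} [Fintype ι]

lemma abs_le_one_of_dotProduct_self_eq_one {z : ι → ℝ} (hz : z ⬝ᵥ z = 1) (a : ι) :
    |z a| ≤ 1 := by
  rw [← sq_le_one_iff_abs_le_one, ← hz, sq]
  exact single_le_sum (f := fun b => z b * z b) (fun b _ => mul_self_nonneg (z b)) (mem_univ a)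

lemma isCompact_setOf_dotProduct_self_eq_one : IsCompact {z : ι → ℝ | z ⬝ᵥ z = 1} := by
  refine Metric.isCompact_of_isClosed_isBounded (isClosed_eq (by fun_prop) continuous_const) ?_
  refine (Metric.isBounded_closedBall (x := (0 : ι → ℝ)) (r := 1)).subset fun z hz => ?_
  rw [mem_closedBall_zero_iff, pi_norm_le_iff_of_nonneg zero_le_one]
  exact fun a => (Real.norm_eq_abs _).le.trans (abs_le_one_of_dotProduct_self_eq_one hz a)

variable {μ : Measure (ι → ℝ)}

lemma integrable_of_ae_dotProduct_self_eq_one [IsFiniteMeasure μ]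
    (hsphere : ∀ᵐ z ∂μ, z ⬝ᵥ z = 1) {f : (ι → ℝ) → ℝ} (hf : Continuous f) : Integrable f μ :=
  hf.integrable_of_ae_mem_isCompact isCompact_setOf_dotProduct_self_eq_one hsphere

lemma integrable_pi_of_ae_dotProduct_self_eq_one {κ : Type*} [Fintype κ]
    [IsProbabilityMeasure μ] (hsphere : ∀ᵐ z ∂μ, z ⬝ᵥ z = 1) {f : (κ → ι → ℝ) → ℝ}
    (hf : Continuous f) : Integrable f (Measure.pi fun _ : κ => μ) := by
  refine hf.integrable_of_ae_mem_isCompact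
    (isCompact_univ_pi fun _ => isCompact_setOf_dotProduct_self_eq_one) ?_
  simp only [Set.mem_univ_pi]
  exact ae_all_iff.2 fun k => (measurePreserving_eval _ k).quasiMeasurePreserving.ae hsphere

lemma sum_integral_sq [IsProbabilityMeasure μ] (hsphere : ∀ᵐ z ∂μ, z ⬝ᵥ z = 1) :
    ∑ a, ∫ z, z a ^ 2 ∂μ = 1 := by
  rw [← integral_finsetSum _ fun a _ =>
      integrable_of_ae_dotProduct_self_eq_one hsphere (by fun_prop),
    integral_congr_ae (g := fun _ => (1 : ℝ)), integral_const, probReal_univ, one_smul]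
  filter_upwards [hsphere] with z hz
  simpa [dotProduct, sq] using hz

lemma sum_integral_sq_mul_sq [IsFiniteMeasure μ] (hsphere : ∀ᵐ z ∂μ, z ⬝ᵥ z = 1) (a : ι) :
    ∑ b, ∫ z, z a ^ 2 * z b ^ 2 ∂μ = ∫ z, z a ^ 2 ∂μ := by
  rw [← integral_finsetSum _ fun b _ =>
    integrable_of_ae_dotProduct_self_eq_one hsphere (by fun_prop)]
  refine integral_congr_ae ?_
  filter_upwards [hsphere] with z hz
  simp only [sq, ← mul_sum]
  rw [← dotProduct, hz, mul_one]

end Sphere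

def IsOrthogonallyInvariant {ι : Type*} [Fintype ι] [DecidableEq ι] (μ : Measure (ι → ℝ)) :
    Prop :=
  ∀ O ∈ orthogonalGroup ι ℝ, μ.map (O *ᵥ ·) = μ

namespace IsOrthogonallyInvariant
variable {ι : Type*} [Fintype ι] [DecidableEq ι] {μ : Measure (ι → ℝ)}

lemma integral_comp_mulVec (hμ : IsOrthogonallyInvariant μ) {O : Matrix ι ι ℝ}
    (hO : O ∈ orthogonalGroup ι ℝ) {f : (ι → ℝ) → ℝ} (hf : Measurable f) :
    ∫ z, f (O *ᵥ z) ∂μ = ∫ z, f z ∂μ := by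
  conv_rhs => rw [← hμ O hO]
  rw [integral_map (by fun_prop) hf.aestronglyMeasurable]

lemma integral_eq_zero_of_odd (hμ : IsOrthogonallyInvariant μ) (a : ι) {f : (ι → ℝ) → ℝ}
    (hf : Measurable f) (hodd : ∀ z, f (Function.update z a (-z a)) = -f z) :
    ∫ z, f z ∂μ = 0 := by
  obtain ⟨O, hO, hOz⟩ := exists_orthogonal_mulVec_eq_update_neg a
  have h := hμ.integral_comp_mulVec hO hf
  simp only [hOz, hodd, integral_neg] at h
  linarith

lemma integral_mul_of_ne (hμ : IsOrthogonallyInvariant μ) {a b : ι} (hab : a ≠ b) :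
    ∫ z, z a * z b ∂μ = 0 :=
  hμ.integral_eq_zero_of_odd a (by fun_prop) fun z => by simp [hab.symm]

lemma integral_sq_eq_of_ne [IsFiniteMeasure μ] (hμ : IsOrthogonallyInvariant μ)
    (hsphere : ∀ᵐ z ∂μ, z ⬝ᵥ z = 1) {a b : ι} (hab : a ≠ b) :
    ∫ z, z a ^ 2 ∂μ = ∫ z, z b ^ 2 ∂μ := by
  obtain ⟨O, hO, hOz⟩ := exists_orthogonal_mulVec_apply_mix hab
  have h := hμ.integral_comp_mulVec hO (f := fun z => z a ^ 2) (by fun_prop)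
  have hexp : ∀ z : ι → ℝ, ((7 * z a - 24 * z b) / 25) ^ 2 =
      49 / 625 * z a ^ 2 - 336 / 625 * (z a * z b) + 576 / 625 * z b ^ 2 := fun z => by ring
  simp only [(hOz _).1, hexp] at h
  rw [integral_add, integral_sub, integral_const_mul, integral_const_mul, integral_const_mul,
    hμ.integral_mul_of_ne hab] at h
  · linarith
  all_goals exact integrable_of_ae_dotProduct_self_eq_one hsphere (by fun_prop)

lemma integral_pow_four_eq_of_ne [IsFiniteMeasure μ] (hμ : IsOrthogonallyInvariant μ)
    (hsphere : ∀ᵐ z ∂μ, z ⬝ᵥ z = 1) {a b : ι} (hab : a ≠ b) :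
    ∫ z, z a ^ 4 ∂μ = 3 * ∫ z, z a ^ 2 * z b ^ 2 ∂μ := by
  obtain ⟨O, hO, hOz⟩ := exists_orthogonal_mulVec_apply_mix hab
  have ha := hμ.integral_comp_mulVec hO (f := fun z => z a ^ 4) (by fun_prop)
  have hb := hμ.integral_comp_mulVec hO (f := fun z => z b ^ 4) (by fun_prop)
  have odd₁ : ∫ z, z a ^ 3 * z b ∂μ = 0 :=
    hμ.integral_eq_zero_of_odd a (by fun_prop) fun z => by
      simp only [Function.update_self, Function.update_of_ne hab.symm]; ring
  have odd₂ : ∫ z, z a * z b ^ 3 ∂μ = 0 :=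
    hμ.integral_eq_zero_of_odd a (by fun_prop) fun z => by simp [hab.symm]
  have hexpa : ∀ z : ι → ℝ, ((7 * z a - 24 * z b) / 25) ^ 4 =
      2401 / 390625 * z a ^ 4 - 32928 / 390625 * (z a ^ 3 * z b) +
        169344 / 390625 * (z a ^ 2 * z b ^ 2) - 387072 / 390625 * (z a * z b ^ 3) +
        331776 / 390625 * z b ^ 4 := fun z => by ring
  have hexpb : ∀ z : ι → ℝ, (-(24 * z a + 7 * z b) / 25) ^ 4 =
      331776 / 390625 * z a ^ 4 + 387072 / 390625 * (z a ^ 3 * z b) +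
        169344 / 390625 * (z a ^ 2 * z b ^ 2) + 32928 / 390625 * (z a * z b ^ 3) +
        2401 / 390625 * z b ^ 4 := fun z => by ring
  simp only [(hOz _).1, (hOz _).2, hexpa, hexpb] at ha hb
  rw [integral_add, integral_sub, integral_add, integral_sub] at ha
  rw [integral_add, integral_add, integral_add, integral_add] at hb
  · simp only [integral_const_mul, odd₁, odd₂] at ha hb
    linarith
  all_goals exact integrable_of_ae_dotProduct_self_eq_one hsphere (by fun_prop)

variable [IsProbabilityMeasure μ]

lemma integral_sq (hμ : IsOrthogonallyInvariant μ) (hsphere : ∀ᵐ z ∂μ, z ⬝ᵥ z = 1) (a : ι) :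
    ∫ z, z a ^ 2 ∂μ = 1 / Fintype.card ι := by
  have hall : ∀ b, ∫ z, z b ^ 2 ∂μ = ∫ z, z a ^ 2 ∂μ := fun b => by
    rcases eq_or_ne b a with rfl | hb
    · rfl
    · exact hμ.integral_sq_eq_of_ne hsphere hb
  have h := sum_integral_sq hsphere
  simp only [hall, sum_const, card_univ, nsmul_eq_mul] at h
  have : Nonempty ι := ⟨a⟩
  rw [eq_div_iff (by positivity), mul_comm, h]

lemma integral_mul (hμ : IsOrthogonallyInvariant μ) (hsphere : ∀ᵐ z ∂μ, z ⬝ᵥ z = 1)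
    (a b : ι) : ∫ z, z a * z b ∂μ = if a = b then 1 / (Fintype.card ι : ℝ) else 0 := by
  split_ifs with hab
  · simp only [hab, ← sq, hμ.integral_sq hsphere]
  · exact hμ.integral_mul_of_ne hab

lemma integral_sq_mul_sq (hμ : IsOrthogonallyInvariant μ) (hsphere : ∀ᵐ z ∂μ, z ⬝ᵥ z = 1)
    (a b : ι) : ∫ z, z a ^ 2 * z b ^ 2 ∂μ =
      (if a = b then 3 else 1) / (Fintype.card ι * (Fintype.card ι + 2)) := by
  set M := ∫ z, z a ^ 4 ∂μ
  have hdiag : ∫ z, z a ^ 2 * z a ^ 2 ∂μ = M := by simp only [← pow_add]; rfl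
  have hterm : ∀ c, ∫ z, z a ^ 2 * z c ^ 2 ∂μ = M / 3 + if c = a then 2 * M / 3 else 0 := by
    intro c
    rcases eq_or_ne c a with rfl | hc
    · rw [hdiag, if_pos rfl]; ring
    · have := hμ.integral_pow_four_eq_of_ne hsphere hc.symm
      rw [if_neg hc]; linarith
  have hsum := sum_integral_sq_mul_sq hsphere a
  simp only [hterm, sum_add_distrib, sum_const, card_univ, nsmul_eq_mul, sum_ite_eq', mem_univ,
    if_true, hμ.integral_sq hsphere] at hsum
  have hc : (0 : ℝ) < Fintype.card ι := by have : Nonempty ι := ⟨a⟩; positivity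
  have hM : M = 3 / (Fintype.card ι * (Fintype.card ι + 2)) := by
    field_simp at hsum ⊢
    linarith
  split_ifs with hab
  · rw [← hab, hdiag, hM]
  · rw [hterm, if_neg (Ne.symm hab), hM]; ring

lemma integral_dotProduct_mulVec_self (hμ : IsOrthogonallyInvariant μ)
    (hsphere : ∀ᵐ z ∂μ, z ⬝ᵥ z = 1) (A : Matrix ι ι ℝ) :
    ∫ z, z ⬝ᵥ A *ᵥ z ∂μ = A.trace / Fintype.card ι := by
  have hexp : ∀ z : ι → ℝ, z ⬝ᵥ A *ᵥ z = ∑ a, ∑ b, A a b * (z a * z b) := fun z => by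
    simp only [dotProduct, mulVec, mul_sum]
    exact sum_congr rfl fun a _ => sum_congr rfl fun b _ => by ring
  simp only [hexp]
  rw [integral_sum_sum_mul (fun a b => A a b) fun a b =>
    integrable_of_ae_dotProduct_self_eq_one hsphere (by fun_prop)]
  simp [hμ.integral_mul hsphere, trace, sum_mul, div_eq_mul_inv]

lemma integral_dotProduct_diagonal_mulVec_self_sq (hμ : IsOrthogonallyInvariant μ)
    (hsphere : ∀ᵐ z ∂μ, z ⬝ᵥ z = 1) (d : ι → ℝ) :
    ∫ z, (z ⬝ᵥ diagonal d *ᵥ z) ^ 2 ∂μ =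
      (2 * (diagonal d * diagonal d).trace + (diagonal d).trace ^ 2) /
        (Fintype.card ι * (Fintype.card ι + 2)) := by
  have hexp : ∀ z : ι → ℝ, (z ⬝ᵥ diagonal d *ᵥ z) ^ 2 =
      ∑ a, ∑ b, d a * d b * (z a ^ 2 * z b ^ 2) := fun z => by
    simp only [dotProduct, mulVec_diagonal, sq, sum_mul_sum]
    exact sum_congr rfl fun a _ => sum_congr rfl fun b _ => by ring
  have hsplit : ∀ a b, d a * d b * (if a = b then 3 else 1) =
      d a * d b + if a = b then 2 * (d a * d a) else 0 := fun a b => by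
    split_ifs with hab
    · subst hab; ring
    · ring
  simp only [hexp]
  rw [integral_sum_sum_mul _ fun a b =>
    integrable_of_ae_dotProduct_self_eq_one hsphere (by fun_prop)]
  simp only [hμ.integral_sq_mul_sq hsphere, ← mul_div_assoc, hsplit, ← sum_div]
  simp only [diagonal_mul_diagonal, trace_diagonal, sq, sum_mul_sum, sum_add_distrib, sum_ite_eq,
    mem_univ, if_true, ← mul_sum]
  ring

/-- Both sides are unchanged when `A` is conjugated by an orthogonal matrix, so it suffices to
treat diagonal `A`. -/
lemma integral_dotProduct_mulVec_self_sq (hμ : IsOrthogonallyInvariant μ)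
    (hsphere : ∀ᵐ z ∂μ, z ⬝ᵥ z = 1) {A : Matrix ι ι ℝ} (hA : A.IsSymm) :
    ∫ z, (z ⬝ᵥ A *ᵥ z) ^ 2 ∂μ =
      (2 * (A * A).trace + A.trace ^ 2) / (Fintype.card ι * (Fintype.card ι + 2)) := by
  obtain ⟨O, hO, d, rfl⟩ := hA.exists_eq_transpose_mul_diagonal_mul
  have hOOt : O * Oᵀ = 1 := (mem_orthogonalGroup_iff _ _).mp hO
  have htrace : ∀ B, (Oᵀ * B * O).trace = B.trace := fun B => by
    rw [trace_mul_comm, ← Matrix.mul_assoc, hOOt, Matrix.one_mul]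
  have hsq : Oᵀ * diagonal d * O * (Oᵀ * diagonal d * O) =
      Oᵀ * (diagonal d * diagonal d) * O := by
    simp only [Matrix.mul_assoc]
    rw [← Matrix.mul_assoc O, hOOt, Matrix.one_mul]
  have hform : ∀ z, z ⬝ᵥ (Oᵀ * diagonal d * O) *ᵥ z = (O *ᵥ z) ⬝ᵥ diagonal d *ᵥ (O *ᵥ z) :=
    fun z => by rw [← mulVec_mulVec, ← mulVec_mulVec, dotProduct_mulVec, vecMul_transpose]
  simp only [hform, hsq, htrace]
  rw [hμ.integral_comp_mulVec hO (f := fun w => (w ⬝ᵥ diagonal d *ᵥ w) ^ 2) (by fun_prop),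
    hμ.integral_dotProduct_diagonal_mulVec_self_sq hsphere]

lemma integral_prod_dotProduct_mulVec_sq (hμ : IsOrthogonallyInvariant μ)
    (hsphere : ∀ᵐ z ∂μ, z ⬝ᵥ z = 1) (A : Matrix ι ι ℝ) :
    ∫ q, (q.1 ⬝ᵥ A *ᵥ q.2) ^ 2 ∂μ.prod μ = (A * Aᵀ).trace / Fintype.card ι ^ 2 := by
  have hsupp : ∀ᵐ q ∂μ.prod μ, q ∈ {z : ι → ℝ | z ⬝ᵥ z = 1} ×ˢ {z | z ⬝ᵥ z = 1} :=
    (Measure.quasiMeasurePreserving_fst.ae hsphere).and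
      (Measure.quasiMeasurePreserving_snd.ae hsphere)
  have hinner : ∀ x y : ι → ℝ,
      (x ⬝ᵥ A *ᵥ y) ^ 2 = y ⬝ᵥ vecMulVec (x ᵥ* A) (x ᵥ* A) *ᵥ y := fun x y => by
    simp [vecMulVec_mulVec, dotProduct_mulVec, dotProduct_comm y, sq]
  have hnorm : ∀ x : ι → ℝ, x ᵥ* A ⬝ᵥ x ᵥ* A = x ⬝ᵥ (A * Aᵀ) *ᵥ x := fun x => by
    rw [← mulVec_mulVec, dotProduct_mulVec, mulVec_transpose]
  rw [integral_prod _ ((by fun_prop : Continuous _).integrable_of_ae_mem_isCompact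
    (isCompact_setOf_dotProduct_self_eq_one.prod isCompact_setOf_dotProduct_self_eq_one) hsupp)]
  simp only [hinner, hμ.integral_dotProduct_mulVec_self hsphere, trace_vecMulVec, hnorm]
  rw [integral_div, hμ.integral_dotProduct_mulVec_self hsphere, div_div, sq]

lemma integral_pi_dotProduct_mulVec_sq {κ : Type*} [Fintype κ] [DecidableEq κ]
    (hμ : IsOrthogonallyInvariant μ) (hsphere : ∀ᵐ z ∂μ, z ⬝ᵥ z = 1) {A : Matrix ι ι ℝ}
    (hA : A.IsSymm) (i j : κ) :
    ∫ z, (z i ⬝ᵥ A *ᵥ z j) ^ 2 ∂Measure.pi (fun _ : κ => μ) =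
      if i = j then (2 * (A * A).trace + A.trace ^ 2) / (Fintype.card ι * (Fintype.card ι + 2))
      else (A * A).trace / Fintype.card ι ^ 2 := by
  split_ifs with hij
  · subst hij
    rw [integral_comp_eval (μ := fun _ : κ => μ) (f := fun x : ι → ℝ => (x ⬝ᵥ A *ᵥ x) ^ 2)
        (by fun_prop : Continuous _).aestronglyMeasurable,
      hμ.integral_dotProduct_mulVec_self_sq hsphere hA]
  · have h := measurePreserving_eval_prodMk_eval (fun _ : κ => μ) hij
    rw [show A * A = A * Aᵀ by rw [hA.eq], ← hμ.integral_prod_dotProduct_mulVec_sq hsphere,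
      ← h.map_eq, integral_map h.measurable.aemeasurable (by fun_prop)]

end IsOrthogonallyInvariant

theorem expected_trace_sq_tilde_C_general {p n : ℕ} (hp : 0 < p) (hn : 0 < n)
    (μ : Measure (Fin p → ℝ)) [IsProbabilityMeasure μ]
    (hsphere : ∀ᵐ z ∂μ, z ⬝ᵥ z = 1)
    (hrot : ∀ O ∈ Matrix.orthogonalGroup (Fin p) ℝ, μ.map (fun z => O.mulVec z) = μ)
    (Λ D : Matrix (Fin p) (Fin p) ℝ) (hΛ : Λᵀ * Λ = D) :
    (∫ z,
        ((((p : ℝ) / n) • (Λ * (∑ i, vecMulVec (z i) (z i)) * Λᵀ)) *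
          (((p : ℝ) / n) • (Λ * (∑ i, vecMulVec (z i) (z i)) * Λᵀ))).trace
        ∂(Measure.pi fun _ : Fin n => μ)) =
      (1 - 1 / (n : ℝ) + 2 / ((n : ℝ) * (1 + 2 / (p : ℝ)))) * (D * D).trace +
        D.trace ^ 2 / ((n : ℝ) * (1 + 2 / (p : ℝ))) := by
  have hμ : IsOrthogonallyInvariant μ := hrot
  have hD : D.IsSymm := hΛ ▸ isSymm_transpose_mul_self Λ
  have htrace : ∀ z : Fin n → Fin p → ℝ,
      ((((p : ℝ) / n) • (Λ * (∑ i, vecMulVec (z i) (z i)) * Λᵀ)) *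
          (((p : ℝ) / n) • (Λ * (∑ i, vecMulVec (z i) (z i)) * Λᵀ))).trace =
        ∑ i, ∑ j, ((p : ℝ) / n) ^ 2 * (z i ⬝ᵥ D *ᵥ z j) ^ 2 := fun z => by
    rw [smul_mul_smul_comm, trace_smul, trace_conj_mul_conj, hΛ, trace_sum_vecMulVec_mul_sq hD,
      smul_eq_mul, mul_sum, sq]
    simp only [mul_sum]
  simp only [htrace]
  rw [integral_sum_sum_mul (fun _ _ => ((p : ℝ) / n) ^ 2) fun i j =>
    integrable_pi_of_ae_dotProduct_self_eq_one hsphere (by fun_prop)]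
  simp only [hμ.integral_pi_dotProduct_mulVec_sq hsphere hD, ← mul_sum, sum_sum_ite_eq_const,
    Fintype.card_fin]
  have hp' : (p : ℝ) ≠ 0 := by positivity
  have hn' : (n : ℝ) ≠ 0 := by positivity
  field_simp
  ring

/-- Let `z₁,…,zₙ` be i.i.d. uniform on the unit sphere of `ℝᵖ` and let `Λ` satisfy
`Λᵀ Λ = D` with `D` symmetric PSD. For `C̃ = (p/n) Λ (Σᵢ zᵢ zᵢᵀ) Λᵀ`,
`E[Tr(C̃²)] = (1 - 1/n + 2/(n(1+2/p))) Tr(D²) + Tr(D)²/(n(1+2/p))`. -/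
theorem expected_trace_sq_tilde_C {p n : ℕ} (hp : 0 < p) (hn : 0 < n)
    (μ : Measure (Fin p → ℝ)) [IsProbabilityMeasure μ]
    (hsphere : ∀ᵐ z ∂μ, z ⬝ᵥ z = 1)
    (hrot : ∀ O ∈ Matrix.orthogonalGroup (Fin p) ℝ, μ.map (fun z => O.mulVec z) = μ)
    (Λ D : Matrix (Fin p) (Fin p) ℝ) (hD : D.PosSemidef) (hΛ : Λᵀ * Λ = D) :
    (∫ z,
        ((((p : ℝ) / n) • (Λ * (∑ i, vecMulVec (z i) (z i)) * Λᵀ)) *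
          (((p : ℝ) / n) • (Λ * (∑ i, vecMulVec (z i) (z i)) * Λᵀ))).trace
        ∂(Measure.pi fun _ : Fin n => μ)) =
      (1 - 1 / (n : ℝ) + 2 / ((n : ℝ) * (1 + 2 / (p : ℝ)))) * (D * D).trace +
        D.trace ^ 2 / ((n : ℝ) * (1 + 2 / (p : ℝ))) :=
  expected_trace_sq_tilde_C_general hp hn μ hsphere hrot Λ D hΛ
end

section
/- Let C̃ be a random symmetric p×p matrix with E[C̃] = Σ, Tr(Σ) = p, and let Σ̃(ρ) = (1-ρ)C̃ + ρI for ρ ∈ R. Then the minimizer of E‖Σ̃(ρ) - Σ‖_F² over ρ is ρ_O = (E[Tr(C̃²)] - E[Tr(C̃)] - E[Tr(C̃Σ)] + Tr(Σ)) / (E[Tr(C̃²)] - 2E[Tr(C̃)] + p), provided the denominator is positive. -/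
open Matrix MeasureTheory Finset

/-- The squared Frobenius norm of a matrix. -/
def frobSq {p : ℕ} (A : Matrix (Fin p) (Fin p) ℝ) : ℝ := ∑ i, ∑ j, (A i j) ^ 2

/-! For symmetric `C̃` and `Σ` the matrix `M = (1-ρ)C̃ + ρI - Σ` is symmetric, so
`‖M‖_F² = Tr(M²)`; expanding the product makes this a polynomial of degree two in `ρ` whose
coefficients are affine in `Tr C̃`, `Tr C̃²` and `Tr(C̃Σ)`. Taking expectations gives `a - 2bρ + cρ²` with `c` the given positive denominator,
and such a quadratic is minimal at its vertex `ρ = b / c`. -/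

lemma frobSq_eq_trace_mul_transpose {p : ℕ} (A : Matrix (Fin p) (Fin p) ℝ) :
    frobSq A = (A * Aᵀ).trace := by
  simp [frobSq, Matrix.trace, Matrix.mul_apply, sq]

lemma frobSq_shrink {p : ℕ} {C S : Matrix (Fin p) (Fin p) ℝ} (hC : Cᵀ = C) (hS : Sᵀ = S)
    (ρ : ℝ) :
    frobSq ((1 - ρ) • C + ρ • 1 - S) =
      (C * C).trace - 2 * (C * S).trace + (S * S).trace
        - 2 * ρ * ((C * C).trace - C.trace - (C * S).trace + S.trace)
        + ρ ^ 2 * ((C * C).trace - 2 * C.trace + p) := by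
  have hSC : (S * C).trace = (C * S).trace := trace_mul_comm S C
  simp only [frobSq_eq_trace_mul_transpose, transpose_sub, transpose_add, transpose_smul,
    transpose_one, hC, hS, add_mul, sub_mul, mul_add, mul_sub, Matrix.smul_mul,
    Matrix.mul_smul, mul_one, one_mul, trace_add, trace_sub, trace_smul, trace_one, hSC,
    Fintype.card_fin, smul_eq_mul]
  ring

section Integration

variable {Ω : Type*} [MeasurableSpace Ω] {μ : Measure Ω}

lemma integrable_trace {n : Type*} [Fintype n] {A : Ω → Matrix n n ℝ}
    (h : ∀ i, Integrable (fun ω => A ω i i) μ) : Integrable (fun ω => (A ω).trace) μ := by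
  simpa only [Matrix.trace, Matrix.diag] using integrable_finsetSum univ fun i _ => h i

lemma integral_affine_comb [IsProbabilityMeasure μ] {X Y Z : Ω → ℝ} (hX : Integrable X μ)
    (hY : Integrable Y μ) (hZ : Integrable Z μ) (a b c d : ℝ) :
    ∫ ω, a * X ω + b * Y ω + c * Z ω + d ∂μ =
      a * ∫ ω, X ω ∂μ + b * ∫ ω, Y ω ∂μ + c * ∫ ω, Z ω ∂μ + d := by
  rw [integral_add (by fun_prop) (by fun_prop), integral_add (by fun_prop) (by fun_prop),
    integral_add (by fun_prop) (by fun_prop), integral_const_mul, integral_const_mul,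
    integral_const_mul, integral_const, probReal_univ, one_smul]

lemma integral_frobSq_shrink [IsProbabilityMeasure μ] {p : ℕ} {C : Ω → Matrix (Fin p) (Fin p) ℝ}
    {S : Matrix (Fin p) (Fin p) ℝ} (hC : ∀ ω, (C ω)ᵀ = C ω) (hS : Sᵀ = S)
    (hint1 : ∀ i j, Integrable (fun ω => C ω i j) μ)
    (hint2 : ∀ i j k l, Integrable (fun ω => C ω i j * C ω k l) μ) (ρ : ℝ) :
    ∫ ω, frobSq ((1 - ρ) • C ω + ρ • 1 - S) ∂μ =
      (∫ ω, (C ω * C ω).trace ∂μ) - 2 * (∫ ω, (C ω * S).trace ∂μ) + (S * S).trace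
        - 2 * ρ * ((∫ ω, (C ω * C ω).trace ∂μ) - (∫ ω, (C ω).trace ∂μ)
          - (∫ ω, (C ω * S).trace ∂μ) + S.trace)
        + ρ ^ 2 * ((∫ ω, (C ω * C ω).trace ∂μ) - 2 * (∫ ω, (C ω).trace ∂μ) + p) := by
  have hCC : Integrable (fun ω => (C ω * C ω).trace) μ := integrable_trace fun i => by
    simpa only [mul_apply] using integrable_finsetSum univ fun j _ => hint2 i j j i
  have hCS : Integrable (fun ω => (C ω * S).trace) μ := integrable_trace fun i => by
    simpa only [mul_apply] using
      integrable_finsetSum univ fun j _ => (hint1 i j).mul_const (S j i)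
  calc ∫ ω, frobSq ((1 - ρ) • C ω + ρ • 1 - S) ∂μ
      = ∫ ω, (1 - 2 * ρ + ρ ^ 2) * (C ω * C ω).trace + (2 * ρ - 2 * ρ ^ 2) * (C ω).trace
          + (2 * ρ - 2) * (C ω * S).trace + ((S * S).trace - 2 * ρ * S.trace + ρ ^ 2 * p) ∂μ := by
        congr 1 with ω
        rw [frobSq_shrink (hC ω) hS]
        ring
    _ = _ := by
        rw [integral_affine_comb hCC (integrable_trace fun i => hint1 i i) hCS]
        ring

end Integration

lemma quadratic_le_at_vertex {a b c : ℝ} (hc : 0 < c) (x : ℝ) :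
    a - 2 * (b / c) * b + (b / c) ^ 2 * c ≤ a - 2 * x * b + x ^ 2 * c := by
  have h : a - 2 * x * b + x ^ 2 * c - (a - 2 * (b / c) * b + (b / c) ^ 2 * c)
      = (x * c - b) ^ 2 / c := by field_simp; ring
  linarith [div_nonneg (sq_nonneg (x * c - b)) hc.le]

theorem shrinkage_mse_minimizer_general {p : ℕ} {Ω : Type*} [MeasurableSpace Ω]
    (μ : Measure Ω) [IsProbabilityMeasure μ]
    (C : Ω → Matrix (Fin p) (Fin p) ℝ) (S : Matrix (Fin p) (Fin p) ℝ)
    (hCsym : ∀ ω, (C ω)ᵀ = C ω) (hSsym : Sᵀ = S)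
    (hint1 : ∀ i j, Integrable (fun ω => C ω i j) μ)
    (hint2 : ∀ i j k l, Integrable (fun ω => C ω i j * C ω k l) μ)
    (hden : 0 < (∫ ω, (C ω * C ω).trace ∂μ) - 2 * (∫ ω, (C ω).trace ∂μ) + (p : ℝ)) :
    ∀ ρ : ℝ,
      (∫ ω, frobSq ((1 - (((∫ ω', (C ω' * C ω').trace ∂μ) - (∫ ω', (C ω').trace ∂μ) -
              (∫ ω', (C ω' * S).trace ∂μ) + S.trace) /
            ((∫ ω', (C ω' * C ω').trace ∂μ) - 2 * (∫ ω', (C ω').trace ∂μ) + (p : ℝ)))) • C ω +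
          (((∫ ω', (C ω' * C ω').trace ∂μ) - (∫ ω', (C ω').trace ∂μ) -
              (∫ ω', (C ω' * S).trace ∂μ) + S.trace) /
            ((∫ ω', (C ω' * C ω').trace ∂μ) - 2 * (∫ ω', (C ω').trace ∂μ) + (p : ℝ))) • 1 - S) ∂μ)
        ≤ (∫ ω, frobSq ((1 - ρ) • C ω + ρ • (1 : Matrix (Fin p) (Fin p) ℝ) - S) ∂μ) := by
  intro ρ
  rw [integral_frobSq_shrink hCsym hSsym hint1 hint2,
    integral_frobSq_shrink hCsym hSsym hint1 hint2]
  exact quadratic_le_at_vertex hden ρ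

/-- Let `C̃` be a random symmetric `p×p` matrix with `E[C̃] = Σ`, `Tr(Σ) = p`, and let
`Σ̃(ρ) = (1-ρ)C̃ + ρI`. The minimizer of `E‖Σ̃(ρ) - Σ‖_F²` over `ρ` is
`ρ_O = (E[Tr C̃²] - E[Tr C̃] - E[Tr(C̃Σ)] + Tr Σ)/(E[Tr C̃²] - 2 E[Tr C̃] + p)`,
provided the denominator is positive. -/
theorem shrinkage_mse_minimizer {p : ℕ} {Ω : Type*} [MeasurableSpace Ω]
    (μ : Measure Ω) [IsProbabilityMeasure μ]
    (C : Ω → Matrix (Fin p) (Fin p) ℝ) (S : Matrix (Fin p) (Fin p) ℝ)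
    (hCsym : ∀ ω, (C ω)ᵀ = C ω) (hSsym : Sᵀ = S) (htr : S.trace = (p : ℝ))
    (hint1 : ∀ i j, Integrable (fun ω => C ω i j) μ)
    (hint2 : ∀ i j k l, Integrable (fun ω => C ω i j * C ω k l) μ)
    (hmean : ∀ i j, (∫ ω, C ω i j ∂μ) = S i j)
    (hden : 0 < (∫ ω, (C ω * C ω).trace ∂μ) - 2 * (∫ ω, (C ω).trace ∂μ) + (p : ℝ)) :
    ∀ ρ : ℝ,
      (∫ ω, frobSq ((1 - (((∫ ω', (C ω' * C ω').trace ∂μ) - (∫ ω', (C ω').trace ∂μ) -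
              (∫ ω', (C ω' * S).trace ∂μ) + S.trace) /
            ((∫ ω', (C ω' * C ω').trace ∂μ) - 2 * (∫ ω', (C ω').trace ∂μ) + (p : ℝ)))) • C ω +
          (((∫ ω', (C ω' * C ω').trace ∂μ) - (∫ ω', (C ω').trace ∂μ) -
              (∫ ω', (C ω' * S).trace ∂μ) + S.trace) /
            ((∫ ω', (C ω' * C ω').trace ∂μ) - 2 * (∫ ω', (C ω').trace ∂μ) + (p : ℝ))) • 1 - S) ∂μ)
        ≤ (∫ ω, frobSq ((1 - ρ) • C ω + ρ • (1 : Matrix (Fin p) (Fin p) ℝ) - S) ∂μ) :=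
  shrinkage_mse_minimizer_general μ C S hCsym hSsym hint1 hint2 hden
end
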